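/- arXiv:1907.07797 — 3 statements merged into one kernel-verified Lean document; each statement's English description precedes it below -/
import Mathlib

section
/- Let Γ be a finite simple graph and G = G(Γ) the right-angled Artin group on Γ. Let Y ⊆ A be a subset of vertices, and suppose w, g ∈ G are such that w ∈ ⟨Y⟩, g⁻¹wg ∈ ⟨Y⟩, and g has no nontrivial left or right divisor in ⟨Y⟩. Then every element of supp(g) commutes with every element of supp(w). -/
/-- The commutation relations of a right-angled Artin group on the graph `Γ`. -/
def raagRels {A : Type*} (Γ : SimpleGraph A) : Set (FreeGroup A) :=
  {r | ∃ x y : A, Γ.Adj x y ∧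
      r = FreeGroup.of x * FreeGroup.of y * (FreeGroup.of x)⁻¹ * (FreeGroup.of y)⁻¹}

/-- The right-angled Artin (partially commutative) group on the graph `Γ`. -/
abbrev RAAG {A : Type*} (Γ : SimpleGraph A) := PresentedGroup (raagRels Γ)

/-- The canonical generator of the RAAG corresponding to a vertex. -/
def raagGen {A : Type*} (Γ : SimpleGraph A) (a : A) : RAAG Γ := PresentedGroup.of a

/-- The word length of an element of a RAAG with respect to the canonical generators. -/
noncomputable def raagLen {A : Type*} [DecidableEq A] (Γ : SimpleGraph A) (g : RAAG Γ) : ℕ :=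
  sInf {n | ∃ w : FreeGroup A, PresentedGroup.mk (raagRels Γ) w = g ∧ w.toWord.length = n}

/-- The support of an element: the set of generators occurring in a minimal-length word
representing it. -/
noncomputable def raagSupp {A : Type*} [DecidableEq A] (Γ : SimpleGraph A) (g : RAAG Γ) : Set A :=
  {a | ∃ w : FreeGroup A, PresentedGroup.mk (raagRels Γ) w = g ∧
      w.toWord.length = raagLen Γ g ∧ a ∈ w.toWord.map Prod.fst}

/-- The canonical parabolic subgroup generated by a subset of the vertices. -/
def parabolic {A : Type*} (Γ : SimpleGraph A) (Y : Set A) : Subgroup (RAAG Γ) :=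
  Subgroup.closure (raagGen Γ '' Y)

/-- `maln K` : the set of elements `x` with `x⁻¹ K x ∩ K = {1}`. -/
def maln {G : Type*} [Group G] (K : Subgroup G) : Set G :=
  {x : G | ∀ k ∈ K, x⁻¹ * k * x ∈ K → k = 1}

/-- An element is cyclically minimal if it has minimal length in its conjugacy class. -/
def CyclicallyMinimal {A : Type*} [DecidableEq A] (Γ : SimpleGraph A) (g : RAAG Γ) : Prop :=
  ∀ x : RAAG Γ, raagLen Γ g ≤ raagLen Γ (x⁻¹ * g * x)

/-- `h` is a left divisor of `g` (lengths add). -/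
noncomputable def leftDivisor {A : Type*} [DecidableEq A] (Γ : SimpleGraph A)
    (h g : RAAG Γ) : Prop :=
  ∃ k : RAAG Γ, g = h * k ∧ raagLen Γ g = raagLen Γ h + raagLen Γ k

/-- `h` is a right divisor of `g` (lengths add). -/
noncomputable def rightDivisor {A : Type*} [DecidableEq A] (Γ : SimpleGraph A)
    (h g : RAAG Γ) : Prop :=
  ∃ k : RAAG Γ, g = k * h ∧ raagLen Γ g = raagLen Γ k + raagLen Γ h

set_option linter.unusedSectionVars false
set_option maxHeartbeats 1000000

namespace RaagNF

variable {A : Type*} [DecidableEq A] (Γ : SimpleGraph A)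

abbrev W (A : Type*) := List (A × Bool)

/-- swap of two adjacent commuting letters -/
inductive Step : W A → W A → Prop
  | swap (p q : W A) (y z : A × Bool) (h : Γ.Adj y.1 z.1) :
      Step (p ++ y :: z :: q) (p ++ z :: y :: q)

/-- shuffle equivalence -/
def Sh (u v : W A) : Prop := Relation.EqvGen (Step Γ) u v

variable {Γ}

lemma Sh.rfl {u : W A} : Sh Γ u u := Relation.EqvGen.refl u

lemma Sh.symm {u v : W A} (h : Sh Γ u v) : Sh Γ v u := Relation.EqvGen.symm _ _ h

lemma Sh.trans {u v w : W A} (h : Sh Γ u v) (h' : Sh Γ v w) : Sh Γ u w :=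
  Relation.EqvGen.trans _ _ _ h h'

lemma Step.sh {u v : W A} (h : Step Γ u v) : Sh Γ u v := Relation.EqvGen.rel _ _ h

lemma Step.append_left {u v : W A} (p : W A) (h : Step Γ u v) : Step Γ (p ++ u) (p ++ v) := by
  cases h with
  | swap q r y z hadj =>
    rw [← List.append_assoc, ← List.append_assoc]
    exact Step.swap _ _ _ _ hadj

lemma Step.append_right {u v : W A} (p : W A) (h : Step Γ u v) : Step Γ (u ++ p) (v ++ p) := by
  cases h with
  | swap q r y z hadj =>
    rw [List.append_assoc]
    rw [List.append_assoc]
    exact Step.swap q (r ++ p) y z hadj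

lemma Sh.append_left {u v : W A} (p : W A) (h : Sh Γ u v) : Sh Γ (p ++ u) (p ++ v) := by
  induction h with
  | rel a b h => exact (Step.append_left p h).sh
  | refl a => exact Sh.rfl
  | symm a b _ ih => exact ih.symm
  | trans a b c _ _ ih ih' => exact ih.trans ih'

lemma Sh.append_right {u v : W A} (p : W A) (h : Sh Γ u v) : Sh Γ (u ++ p) (v ++ p) := by
  induction h with
  | rel a b h => exact (Step.append_right p h).sh
  | refl a => exact Sh.rfl
  | symm a b _ ih => exact ih.symm
  | trans a b c _ _ ih ih' => exact ih.trans ih'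

lemma Sh.cons {u v : W A} (x : A × Bool) (h : Sh Γ u v) : Sh Γ (x :: u) (x :: v) :=
  h.append_left [x]

lemma Sh.append {u u' v v' : W A} (h : Sh Γ u u') (h' : Sh Γ v v') :
    Sh Γ (u ++ v) (u' ++ v') :=
  (h.append_right v).trans (h'.append_left u')

lemma Step.perm {u v : W A} (h : Step Γ u v) : u.Perm v := by
  cases h with
  | swap p q y z hadj => exact List.Perm.append_left p (List.Perm.swap' _ _ (List.Perm.refl q))

lemma Sh.perm {u v : W A} (h : Sh Γ u v) : u.Perm v := by
  induction h with
  | rel a b h => exact h.perm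
  | refl a => exact List.Perm.refl a
  | symm a b _ ih => exact ih.symm
  | trans a b c _ _ ih ih' => exact ih.trans ih'

lemma Sh.length {u v : W A} (h : Sh Γ u v) : u.length = v.length := h.perm.length_eq

/-- shuffle a letter commuting with a prefix to the front -/
lemma sh_to_front {l₁ l₂ : W A} {x : A × Bool} (h : ∀ z ∈ l₁, Γ.Adj x.1 z.1) :
    Sh Γ (l₁ ++ x :: l₂) (x :: (l₁ ++ l₂)) := by
  induction l₁ with
  | nil => exact Sh.rfl
  | cons z l ih =>
    have h1 : Sh Γ (z :: (l ++ x :: l₂)) (z :: (x :: (l ++ l₂))) :=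
      Sh.cons z (ih fun w hw => h w (List.mem_cons_of_mem _ hw))
    refine h1.trans ?_
    have : Step Γ ([] ++ z :: x :: (l ++ l₂)) ([] ++ x :: z :: (l ++ l₂)) :=
      Step.swap [] _ z x ((h z (List.mem_cons_self)).symm)
    simpa using this.sh

/-- projection to the letters with base in `{a, b}` -/
def pr (a b : A) (l : W A) : W A := l.filter (fun z => z.1 = a ∨ z.1 = b)

lemma pr_append (a b : A) (u v : W A) : pr a b (u ++ v) = pr a b u ++ pr a b v :=
  List.filter_append _ _

lemma pr_cons_of (a b : A) {x : A × Bool} (h : x.1 = a ∨ x.1 = b) (l : W A) :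
    pr a b (x :: l) = x :: pr a b l := by
  simp [pr, List.filter_cons, h]

lemma pr_cons_of_not (a b : A) {x : A × Bool} (h : ¬(x.1 = a ∨ x.1 = b)) (l : W A) :
    pr a b (x :: l) = pr a b l := by
  simp [pr, List.filter_cons, h]

/-- projection equivalence -/
def PrEq (u v : W A) : Prop := ∀ a b : A, ¬ Γ.Adj a b → pr a b u = pr a b v

lemma Step.prEq {u v : W A} (h : Step Γ u v) : PrEq (Γ := Γ) u v := by
  cases h with
  | swap p q y z hadj =>
    intro a b hab
    rw [pr_append, pr_append]
    congr 1
    -- y and z cannot both survive the filter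
    by_cases hy : y.1 = a ∨ y.1 = b <;> by_cases hz : z.1 = a ∨ z.1 = b
    · exfalso
      rcases hy with hy | hy <;> rcases hz with hz | hz
      · exact (Γ.irrefl (hy ▸ hz ▸ hadj))
      · exact hab (hy ▸ hz ▸ hadj)
      · exact hab (hz ▸ hy ▸ hadj).symm
      · exact (Γ.irrefl (hy ▸ hz ▸ hadj))
    · simp [pr, List.filter_cons, hy, hz]
    · simp [pr, List.filter_cons, hy, hz]
    · simp [pr, List.filter_cons, hy, hz]

lemma Sh.prEq {u v : W A} (h : Sh Γ u v) : PrEq (Γ := Γ) u v := by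
  induction h with
  | rel x y h => exact h.prEq
  | refl x => exact fun _ _ _ => Eq.refl _
  | symm x y _ ih => exact fun a b hab => (ih a b hab).symm
  | trans x y z _ _ ih ih' => exact fun a b hab => (ih a b hab).trans (ih' a b hab)

/-- If all projections of `w` agree with those of `x :: u`, then `x` occurs in `w`
preceded only by letters adjacent to `x`, and the rest is projection-equivalent to `u`. -/
lemma prEq_cons_split {w u : W A} {x : A × Bool} (h : PrEq (Γ := Γ) w (x :: u)) :
    ∃ l₁ l₂ : W A, w = l₁ ++ x :: l₂ ∧ (∀ z ∈ l₁, Γ.Adj x.1 z.1) ∧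
      PrEq (Γ := Γ) (l₁ ++ l₂) u := by
  -- first, find the first letter of w with base x.1
  have haa : pr x.1 x.1 w = x :: pr x.1 x.1 u := by
    have := h x.1 x.1 (Γ.irrefl)
    rwa [pr_cons_of x.1 x.1 (Or.inl rfl)] at this
  -- split w at the first occurrence of a letter with base x.1
  obtain ⟨l₁, l₂, hw, hl₁, -⟩ :
      ∃ l₁ l₂, w = l₁ ++ x :: l₂ ∧ (∀ z ∈ l₁, z.1 ≠ x.1) ∧ pr x.1 x.1 l₂ = pr x.1 x.1 u := by
    clear h
    induction w with
    | nil => simp [pr] at haa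
    | cons z w ih =>
      by_cases hz : z.1 = x.1
      · rw [pr_cons_of x.1 x.1 (Or.inl hz)] at haa
        obtain ⟨h1, h2⟩ := List.cons_eq_cons.mp haa
        exact ⟨[], w, by rw [h1]; rfl, by simp, h2⟩
      · rw [pr_cons_of_not x.1 x.1 (by simpa using hz)] at haa
        obtain ⟨l₁, l₂, hw, hl₁, hpr⟩ := ih haa
        exact ⟨z :: l₁, l₂, by rw [hw]; rfl, by
          intro t ht
          rcases List.mem_cons.mp ht with h | h
          · exact h ▸ hz
          · exact hl₁ t h, hpr⟩
  -- every letter of l₁ is adjacent to x.1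
  have hadj : ∀ z ∈ l₁, Γ.Adj x.1 z.1 := by
    intro z hz
    by_contra hne
    have hprab := h x.1 z.1 hne
    rw [hw, pr_append, pr_cons_of x.1 z.1 (Or.inl rfl) l₂, pr_cons_of x.1 z.1 (Or.inl rfl) u] at hprab
    -- LHS head has base ≠ x.1 since it's in l₁, RHS head is x
    have hmem : z ∈ pr x.1 z.1 l₁ := by
      simp only [pr, List.mem_filter]
      exact ⟨hz, by simp⟩
    have hne2 : pr x.1 z.1 l₁ ≠ [] := fun hnil => by simp [hnil] at hmem
    obtain ⟨h0, t0, ht0⟩ := List.exists_cons_of_ne_nil hne2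
    rw [ht0] at hprab
    have : h0 = x := by
      have h' : h0 :: (t0 ++ x :: pr x.1 z.1 l₂) = x :: pr x.1 z.1 u := by simpa using hprab
      exact (List.cons_eq_cons.mp h').1
    have hh0 : h0 ∈ l₁ := by
      have : h0 ∈ pr x.1 z.1 l₁ := ht0 ▸ List.mem_cons_self
      exact List.mem_of_mem_filter this
    exact (hl₁ h0 hh0) (by rw [this])
  refine ⟨l₁, l₂, hw, hadj, ?_⟩
  -- remaining projections
  intro c d hcd
  have hw' := h c d hcd
  rw [hw, pr_append] at hw'
  by_cases hx : x.1 = c ∨ x.1 = d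
  · -- letters of l₁ are not in {c, d}
    have hl₁cd : pr c d l₁ = [] := by
      rw [pr, List.filter_eq_nil_iff]
      intro z hz
      simp only [decide_eq_true_eq]
      rintro (h1 | h1)
      · rcases hx with h2 | h2
        · exact hl₁ z hz (h1.trans h2.symm)
        · exact hcd (h2 ▸ h1 ▸ (hadj z hz)).symm
      · rcases hx with h2 | h2
        · exact hcd (h2 ▸ h1 ▸ (hadj z hz))
        · exact hl₁ z hz (h1.trans h2.symm)
    rw [hl₁cd, pr_cons_of c d hx, pr_cons_of c d hx] at hw'
    rw [pr_append, hl₁cd]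
    simpa using (List.cons_eq_cons.mp hw').2
  · rw [pr_cons_of_not c d hx, pr_cons_of_not c d hx] at hw'
    rw [pr_append]
    exact hw'

lemma pr_self_nil {w : W A} (h : ∀ a : A, pr a a w = []) : w = [] := by
  cases w with
  | nil => rfl
  | cons z t =>
    exfalso
    have := h z.1
    rw [pr_cons_of z.1 z.1 (Or.inl rfl)] at this
    exact List.cons_ne_nil _ _ this

lemma prEq_sh : ∀ {u w : W A}, PrEq (Γ := Γ) w u → Sh Γ w u := by
  intro u
  induction u with
  | nil =>
    intro w h
    have : w = [] := pr_self_nil (fun a => h a a (Γ.irrefl))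
    rw [this]; exact Sh.rfl
  | cons x u ih =>
    intro w h
    obtain ⟨l₁, l₂, hw, hadj, hpr⟩ := prEq_cons_split h
    have h1 : Sh Γ w (x :: (l₁ ++ l₂)) := hw ▸ sh_to_front hadj
    exact h1.trans (Sh.cons x (ih hpr))

lemma sh_cons_split {w u : W A} {x : A × Bool} (h : Sh Γ w (x :: u)) :
    ∃ l₁ l₂ : W A, w = l₁ ++ x :: l₂ ∧ (∀ z ∈ l₁, Γ.Adj x.1 z.1) ∧ Sh Γ (l₁ ++ l₂) u := by
  obtain ⟨l₁, l₂, hw, hadj, hpr⟩ := prEq_cons_split h.prEq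
  exact ⟨l₁, l₂, hw, hadj, prEq_sh hpr⟩

lemma sh_cons_cancel {u v : W A} {x : A × Bool} (h : Sh Γ (x :: u) (x :: v)) : Sh Γ u v := by
  apply prEq_sh
  intro a b hab
  have hp := h.prEq a b hab
  by_cases hx : x.1 = a ∨ x.1 = b
  · rw [pr_cons_of a b hx, pr_cons_of a b hx] at hp
    exact (List.cons_eq_cons.mp hp).2
  · rwa [pr_cons_of_not a b hx, pr_cons_of_not a b hx] at hp

/-- flip the sign of a letter -/
def bar (x : A × Bool) : A × Bool := (x.1, !x.2)

@[simp] lemma bar_bar (x : A × Bool) : bar (bar x) = x := by simp [bar]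

@[simp] lemma bar_fst (x : A × Bool) : (bar x).1 = x.1 := rfl

variable (Γ) in
/-- A word is reduced if no shuffle of it contains an adjacent cancelling pair. -/
def IsRed (l : W A) : Prop := ¬ ∃ (p q : W A) (x : A × Bool), Sh Γ l (p ++ x :: bar x :: q)

lemma IsRed.sh {l l' : W A} (h : Sh Γ l l') (hr : IsRed Γ l) : IsRed Γ l' :=
  fun ⟨p, q, x, hx⟩ => hr ⟨p, q, x, h.trans hx⟩

lemma isRed_nil : IsRed Γ ([] : W A) := by
  rintro ⟨p, q, x, hx⟩
  have := hx.length
  simp at this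

lemma isRed_singleton (x : A × Bool) : IsRed Γ [x] := by
  rintro ⟨p, q, y, hy⟩
  have := hy.length
  simp at this
  omega

lemma IsRed.tail {l : W A} {x : A × Bool} (h : IsRed Γ (x :: l)) : IsRed Γ l := by
  rintro ⟨p, q, y, hy⟩
  exact h ⟨x :: p, q, y, by simpa using Sh.cons x hy⟩

lemma IsRed.prefix {u v : W A} (h : IsRed Γ (u ++ v)) : IsRed Γ u := by
  rintro ⟨p, q, y, hy⟩
  refine h ⟨p, q ++ v, y, ?_⟩
  have := hy.append_right v
  simpa using this

lemma IsRed.suffix {u v : W A} (h : IsRed Γ (u ++ v)) : IsRed Γ v := by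
  rintro ⟨p, q, y, hy⟩
  refine h ⟨u ++ p, q, y, ?_⟩
  have := hy.append_left u
  simpa using this

lemma IsRed.no_front_cancel {l : W A} {x : A × Bool} (h : IsRed Γ (x :: l)) :
    ¬ ∃ u : W A, Sh Γ l (bar x :: u) := by
  rintro ⟨u, hu⟩
  exact h ⟨[], u, x, by simpa using Sh.cons x hu⟩

lemma IsRed.cons {l : W A} {x : A × Bool} (hred : IsRed Γ l)
    (hnc : ¬ ∃ u : W A, Sh Γ l (bar x :: u)) : IsRed Γ (x :: l) := by
  rintro ⟨p, q, y, hy⟩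
  obtain ⟨l₁, l₂, heq, hadj, hsh⟩ := sh_cons_split hy.symm
  -- heq : p ++ y :: bar y :: q = l₁ ++ x :: l₂
  have hfront : l₁ = p → x = y → l₂ = bar y :: q → False := by
    intro h1 h2 h3
    subst h1
    refine hnc ⟨l₁ ++ q, ?_⟩
    have h5 : l₂ = bar x :: q := by rw [h3, h2]
    rw [h5] at hsh
    exact hsh.symm.trans (sh_to_front (by intro z hz; exact hadj z hz))
  rcases List.append_eq_append_iff.mp heq.symm with ⟨a', ha1, ha2⟩ | ⟨c', hc1, hc2⟩
  · -- ha1 : p = l₁ ++ a', ha2 : x :: l₂ = a' ++ y :: bar y :: q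
    match a', ha2 with
    | [], ha2 =>
      rw [List.nil_append] at ha2
      rw [List.append_nil] at ha1
      exact hfront ha1.symm (List.cons_eq_cons.mp ha2).1 (List.cons_eq_cons.mp ha2).2
    | x' :: a'', ha2 =>
      rw [List.cons_append] at ha2
      obtain ⟨rfl, h2⟩ := List.cons_eq_cons.mp ha2
      refine hred ⟨l₁ ++ a'', q, y, hsh.symm.trans ?_⟩
      rw [h2]
      simp [Sh.rfl]
  · -- hc1 : l₁ = p ++ c', hc2 : y :: bar y :: q = c' ++ x :: l₂
    match c', hc2 with
    | [], hc2 =>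
      rw [List.nil_append] at hc2
      rw [List.append_nil] at hc1
      exact hfront hc1 (List.cons_eq_cons.mp hc2).1.symm (List.cons_eq_cons.mp hc2).2.symm
    | [y'], hc2 =>
      rw [List.cons_append, List.nil_append] at hc2
      obtain ⟨rfl, h2⟩ := List.cons_eq_cons.mp hc2
      obtain ⟨hxy, -⟩ := List.cons_eq_cons.mp h2
      have : Γ.Adj x.1 y.1 := hadj y (by rw [hc1]; simp)
      rw [← hxy] at this
      exact Γ.irrefl this
    | y' :: y'' :: c'', hc2 =>
      rw [List.cons_append, List.cons_append] at hc2
      obtain ⟨rfl, h2⟩ := List.cons_eq_cons.mp hc2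
      obtain ⟨rfl, h3⟩ := List.cons_eq_cons.mp h2
      refine hred ⟨p, c'' ++ l₂, y, hsh.symm.trans ?_⟩
      rw [hc1]
      simp only [List.append_assoc, List.cons_append]
      exact Sh.rfl

/-- Concatenation of two reduced words is reduced, unless a letter at the end of `u`
cancels a letter at the front of `v`. -/
lemma append_red_or_cancel : ∀ (u : W A), IsRed Γ u → ∀ (v : W A), IsRed Γ v →
    IsRed Γ (u ++ v) ∨ ∃ (x : A × Bool) (t s : W A), Sh Γ u (t ++ [x]) ∧ Sh Γ v (bar x :: s) := by
  intro u
  induction u using List.reverseRecOn with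
  | nil => intro _ v hv; left; simpa using hv
  | append_singleton u' x ih =>
    intro hu v hv
    by_cases hC : ∃ s, Sh Γ v (bar x :: s)
    · obtain ⟨s, hs⟩ := hC; exact Or.inr ⟨x, u', s, Sh.rfl, hs⟩
    · have hxv : IsRed Γ (x :: v) := hv.cons hC
      rcases ih hu.prefix (x :: v) hxv with h | ⟨y, t', s', hu', hxvy⟩
      · left; simpa [List.append_assoc] using h
      · obtain ⟨l₁, l₂, heq, hadj, hsh⟩ := sh_cons_split hxvy
        -- heq : x :: v = l₁ ++ bar y :: l₂
        match l₁, heq with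
        | [], heq =>
          rw [List.nil_append] at heq
          obtain ⟨hx, hv2⟩ := List.cons_eq_cons.mp heq
          exfalso
          refine hu ⟨t', [], bar x, ?_⟩
          have h1 : Sh Γ (u' ++ [x]) ((t' ++ [y]) ++ [x]) := hu'.append_right [x]
          have hy : y = bar x := by rw [hx, bar_bar]
          rw [hy] at h1
          refine h1.trans ?_
          rw [bar_bar]
          simp only [List.append_assoc, List.cons_append, List.nil_append]
          exact Sh.rfl
        | z :: l₁', heq =>
          rw [List.cons_append] at heq
          obtain ⟨hx, hv2⟩ := List.cons_eq_cons.mp heq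
          subst hx
          have hadjx : Γ.Adj y.1 x.1 := hadj x (List.mem_cons_self)
          have hadj' : ∀ w ∈ l₁', Γ.Adj y.1 w.1 := fun w hw => hadj w (List.mem_cons_of_mem _ hw)
          refine Or.inr ⟨y, t' ++ [x], l₁' ++ l₂, ?_, ?_⟩
          · have h1 : Sh Γ (u' ++ [x]) ((t' ++ [y]) ++ [x]) := hu'.append_right [x]
            refine h1.trans ?_
            have h2 : Step Γ (t' ++ y :: x :: []) (t' ++ x :: y :: []) := Step.swap _ _ _ _ hadjx
            have h3 : Sh Γ ((t' ++ [y]) ++ [x]) (t' ++ x :: y :: []) := by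
              simpa [List.append_assoc] using h2.sh
            refine h3.trans ?_
            simp only [List.append_assoc, List.cons_append, List.nil_append]
            exact Sh.rfl
          · rw [hv2]
            exact sh_to_front hadj'

variable (Γ) in
/-- The image of a word in the RAAG. -/
def mkW (l : W A) : RAAG Γ := PresentedGroup.mk (raagRels Γ) (FreeGroup.mk l)

lemma mkW_append (u v : W A) : mkW Γ (u ++ v) = mkW Γ u * mkW Γ v := by
  rw [mkW, mkW, mkW, ← FreeGroup.mul_mk, map_mul]

@[simp] lemma mkW_nil : mkW Γ ([] : W A) = 1 := by
  rw [mkW, ← FreeGroup.one_eq_mk, map_one]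

variable (Γ) in
/-- The generator or its inverse corresponding to a letter. -/
def genP (x : A × Bool) : RAAG Γ := if x.2 then raagGen Γ x.1 else (raagGen Γ x.1)⁻¹

lemma mkW_singleton (x : A × Bool) : mkW Γ [x] = genP Γ x := by
  obtain ⟨a, ε⟩ := x
  cases ε
  · have : ([(a, false)] : W A) = FreeGroup.invRev [(a, true)] := by
      simp [FreeGroup.invRev]
    rw [genP, mkW, this, ← FreeGroup.inv_mk, map_inv]
    rfl
  · rfl

lemma mkW_cons (x : A × Bool) (l : W A) : mkW Γ (x :: l) = genP Γ x * mkW Γ l := by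
  rw [← mkW_singleton, ← mkW_append]
  rfl

lemma gen_comm {a b : A} (h : Γ.Adj a b) : Commute (raagGen Γ a) (raagGen Γ b) := by
  have hmem : (FreeGroup.of a * FreeGroup.of b * (FreeGroup.of a)⁻¹ * (FreeGroup.of b)⁻¹ :
      FreeGroup A) ∈ raagRels Γ := ⟨a, b, h, rfl⟩
  have h1 : PresentedGroup.mk (raagRels Γ)
      (FreeGroup.of a * FreeGroup.of b * (FreeGroup.of a)⁻¹ * (FreeGroup.of b)⁻¹) = 1 :=
    (QuotientGroup.eq_one_iff _).mpr (Subgroup.subset_normalClosure hmem)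
  simp only [map_mul, map_inv] at h1
  have h2 : raagGen Γ a * raagGen Γ b * (raagGen Γ a)⁻¹ * (raagGen Γ b)⁻¹ = 1 := h1
  have h3 : (raagGen Γ a * raagGen Γ b) * (raagGen Γ b * raagGen Γ a)⁻¹ = 1 := by
    rw [mul_inv_rev, ← mul_assoc]
    exact h2
  exact (commute_iff_eq _ _).mpr (mul_inv_eq_one.mp h3)

lemma genP_comm {x z : A × Bool} (h : Γ.Adj x.1 z.1) : Commute (genP Γ x) (genP Γ z) := by
  obtain ⟨a, ε⟩ := x
  obtain ⟨b, δ⟩ := z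
  have hc : Commute (raagGen Γ a) (raagGen Γ b) := gen_comm h
  have h1 : Commute (genP Γ (a, ε)) (raagGen Γ b) := by
    cases ε
    · simpa [genP] using hc.inv_left
    · simpa [genP] using hc
  cases δ
  · simpa [genP] using h1.inv_right
  · simpa [genP] using h1

lemma Step.mkW_eq {u v : W A} (h : Step Γ u v) : mkW Γ u = mkW Γ v := by
  cases h with
  | swap p q y z hadj =>
    have : mkW Γ (y :: z :: q) = mkW Γ (z :: y :: q) := by
      rw [mkW_cons, mkW_cons, mkW_cons, mkW_cons, ← mul_assoc, ← mul_assoc,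
        (genP_comm hadj).eq]
    rw [show p ++ y :: z :: q = p ++ (y :: z :: q) from rfl, mkW_append, this, ← mkW_append]

lemma Sh.mkW_eq {u v : W A} (h : Sh Γ u v) : mkW Γ u = mkW Γ v := by
  induction h with
  | rel a b h => exact h.mkW_eq
  | refl a => rfl
  | symm a b _ ih => exact ih.symm
  | trans a b c _ _ ih ih' => exact ih.trans ih'

@[simp] lemma genP_bar (x : A × Bool) : genP Γ (bar x) = (genP Γ x)⁻¹ := by
  obtain ⟨a, ε⟩ := x
  cases ε <;> simp [genP, bar]

lemma mkW_cancel (x : A × Bool) (q : W A) : mkW Γ (x :: bar x :: q) = mkW Γ q := by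
  rw [mkW_cons, mkW_cons, ← mul_assoc, genP_bar, mul_inv_cancel, one_mul]

/-- every word reduces to a reduced word -/
lemma exists_red (l : W A) : ∃ r : W A, IsRed Γ r ∧ mkW Γ r = mkW Γ l ∧
    r.length ≤ l.length ∧ ∀ z ∈ r, z ∈ l := by
  generalize hn : l.length = n
  induction n using Nat.strong_induction_on generalizing l with
  | _ n ih =>
    by_cases hred : IsRed Γ l
    · exact ⟨l, hred, rfl, le_of_eq hn, fun z hz => hz⟩
    · rw [IsRed, not_not] at hred
      obtain ⟨p, q, x, hx⟩ := hred
      have hmk : mkW Γ l = mkW Γ (p ++ q) := by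
        rw [hx.mkW_eq, mkW_append, mkW_cancel, ← mkW_append]
      have hlen : l.length = p.length + q.length + 2 := by
        have := hx.length
        simp at this
        omega
      have hlt : (p ++ q).length < n := by
        rw [List.length_append]; omega
      obtain ⟨r, hr, hmk', hle, hmem⟩ := ih _ hlt (p ++ q) rfl
      refine ⟨r, hr, hmk'.trans hmk.symm, ?_, ?_⟩
      · rw [List.length_append] at hle
        rw [List.length_append] at hlt
        omega
      · intro z hz
        have h1 : z ∈ p ++ q := hmem z hz
        have h2 : z ∈ p ++ x :: bar x :: q := by
          rcases List.mem_append.mp h1 with h | h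
          · exact List.mem_append.mpr (Or.inl h)
          · exact List.mem_append.mpr (Or.inr (by simp [h]))
        exact (hx.perm.mem_iff).mpr h2

variable (Γ) in
/-- The type of reduced words. -/
abbrev RedW := {l : W A // IsRed Γ l}

variable (Γ) in
instance redSetoid : Setoid (RedW Γ) :=
  ⟨fun u v => Sh Γ u.1 v.1, fun _ => Sh.rfl, Sh.symm, Sh.trans⟩

variable (Γ) in
/-- Reduced words up to shuffle equivalence. -/
abbrev RW := Quotient (redSetoid Γ)

lemma red_of_sh_cons {l u : W A} {x : A × Bool} (hl : IsRed Γ l) (h : Sh Γ l (x :: u)) :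
    IsRed Γ u := (hl.sh h).tail

open Classical in
/-- Left multiplication by the letter `x` on reduced words. -/
noncomputable def phi (x : A × Bool) : RW Γ → RW Γ :=
  Quotient.lift
    (fun l : RedW Γ =>
      if h : ∃ u, Sh Γ l.1 (bar x :: u) then
        (⟦⟨h.choose, red_of_sh_cons l.2 h.choose_spec⟩⟧ : RW Γ)
      else ⟦⟨x :: l.1, l.2.cons h⟩⟧)
    (by
      intro l l' hll'
      have hll : Sh Γ l.1 l'.1 := hll'
      by_cases h : ∃ u, Sh Γ l.1 (bar x :: u)
      · have h' : ∃ u, Sh Γ l'.1 (bar x :: u) := by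
          obtain ⟨u, hu⟩ := h
          exact ⟨u, hll.symm.trans hu⟩
        rw [dif_pos h, dif_pos h']
        refine Quotient.sound ?_
        have h1 : Sh Γ l.1 (bar x :: h.choose) := h.choose_spec
        have h2 : Sh Γ l'.1 (bar x :: h'.choose) := h'.choose_spec
        exact sh_cons_cancel (h1.symm.trans (hll.trans h2))
      · have h' : ¬ ∃ u, Sh Γ l'.1 (bar x :: u) := by
          rintro ⟨u, hu⟩
          exact h ⟨u, hll.trans hu⟩
        rw [dif_neg h, dif_neg h']
        exact Quotient.sound (Sh.cons x hll))

lemma phi_of_cancel {x : A × Bool} {l : RedW Γ} {u : W A} (hu : IsRed Γ u)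
    (h : Sh Γ l.1 (bar x :: u)) : phi x (⟦l⟧ : RW Γ) = ⟦⟨u, hu⟩⟧ := by
  classical
  have hex : ∃ v, Sh Γ l.1 (bar x :: v) := ⟨u, h⟩
  rw [phi, Quotient.lift_mk]
  rw [dif_pos hex]
  refine Quotient.sound ?_
  exact sh_cons_cancel (hex.choose_spec.symm.trans h)

lemma phi_of_no {x : A × Bool} {l : RedW Γ} (h : ¬ ∃ u, Sh Γ l.1 (bar x :: u)) :
    phi x (⟦l⟧ : RW Γ) = ⟦⟨x :: l.1, l.2.cons h⟩⟧ := by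
  classical
  rw [phi, Quotient.lift_mk]
  rw [dif_neg h]

lemma phi_phi (x : A × Bool) (t : RW Γ) : phi x (phi (bar x) t) = t := by
  induction t using Quotient.ind with
  | _ l =>
    by_cases h : ∃ u, Sh Γ l.1 (bar (bar x) :: u)
    · obtain ⟨u, hu⟩ := h
      rw [bar_bar] at hu
      have hured : IsRed Γ u := red_of_sh_cons l.2 hu
      have h1 : phi (bar x) (⟦l⟧ : RW Γ) = ⟦⟨u, hured⟩⟧ :=
        phi_of_cancel hured (by rw [bar_bar]; exact hu)
      rw [h1]
      have h2 : ¬ ∃ v, Sh Γ u (bar x :: v) := by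
        rintro ⟨v, hv⟩
        refine l.2 ⟨[], v, x, ?_⟩
        exact hu.trans (by simpa using Sh.cons x hv)
      rw [phi_of_no h2]
      exact (Quotient.sound hu.symm)
    · rw [phi_of_no h]
      exact phi_of_cancel l.2 Sh.rfl

variable (Γ) in
/-- Left multiplication by `x` as a permutation of `RW Γ`. -/
noncomputable def phiEquiv (x : A × Bool) : Equiv.Perm (RW Γ) where
  toFun := phi x
  invFun := phi (bar x)
  left_inv := fun t => by
    have := phi_phi (Γ := Γ) (bar x) t
    rwa [bar_bar] at this
  right_inv := fun t => phi_phi x t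

lemma sub_eq_quot_eq {a b : W A} {pa : IsRed Γ a} {pb : IsRed Γ b} (h : Sh Γ a b) :
    (⟦⟨a, pa⟩⟧ : RW Γ) = ⟦⟨b, pb⟩⟧ := Quotient.sound h

lemma cancel_cons_iff {x y : A × Bool} (hadj : Γ.Adj x.1 y.1) (l : W A) :
    (∃ u, Sh Γ (y :: l) (bar x :: u)) ↔ (∃ u, Sh Γ l (bar x :: u)) := by
  have hne : x.1 ≠ y.1 := Γ.ne_of_adj hadj
  constructor
  · rintro ⟨u, hu⟩
    obtain ⟨l₁, l₂, heq, hcom, hsh⟩ := sh_cons_split hu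
    match l₁, heq with
    | [], heq =>
      rw [List.nil_append] at heq
      exact absurd (congrArg Prod.fst (List.cons_eq_cons.mp heq).1.symm)
        (by simpa using hne)
    | z :: l₁', heq =>
      rw [List.cons_append] at heq
      obtain ⟨rfl, hl⟩ := List.cons_eq_cons.mp heq
      refine ⟨l₁' ++ l₂, ?_⟩
      rw [hl]
      exact sh_to_front (fun w hw => hcom w (List.mem_cons_of_mem _ hw))
  · rintro ⟨u, hu⟩
    refine ⟨y :: u, (Sh.cons y hu).trans ?_⟩
    have h1 : Step Γ ([] ++ y :: bar x :: u) ([] ++ bar x :: y :: u) :=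
      Step.swap [] u y (bar x) (by simpa using hadj.symm)
    simpa using h1.sh

lemma phi_comm_os {x y : A × Bool} (hadj : Γ.Adj x.1 y.1) (l : RedW Γ)
    (hx : ∃ u, Sh Γ l.1 (bar x :: u)) (hy : ¬ ∃ v, Sh Γ l.1 (bar y :: v)) :
    phi x (phi y (⟦l⟧ : RW Γ)) = phi y (phi x (⟦l⟧ : RW Γ)) := by
  obtain ⟨u, hu⟩ := hx
  have hured : IsRed Γ u := red_of_sh_cons l.2 hu
  have hyl : IsRed Γ (y :: l.1) := l.2.cons hy
  -- LHS
  have h2 : Sh Γ (y :: l.1) (bar x :: y :: u) := by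
    refine (Sh.cons y hu).trans ?_
    have := Step.swap (Γ := Γ) [] u y (bar x) (by simpa using hadj.symm)
    simpa using this.sh
  have hyu : IsRed Γ (y :: u) := red_of_sh_cons hyl h2
  have hLHS : phi x (phi y (⟦l⟧ : RW Γ)) = ⟦⟨y :: u, hyu⟩⟧ := by
    rw [phi_of_no hy]
    exact phi_of_cancel (l := ⟨y :: l.1, hyl⟩) hyu h2
  -- RHS
  have h3 : ¬ ∃ w, Sh Γ u (bar y :: w) := by
    rintro ⟨w, hw⟩
    refine hy ⟨bar x :: w, ?_⟩
    refine hu.trans ((Sh.cons (bar x) hw).trans ?_)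
    have := Step.swap (Γ := Γ) [] w (bar x) (bar y) (by simpa using hadj)
    simpa using this.sh
  have hRHS : phi y (phi x (⟦l⟧ : RW Γ)) = ⟦⟨y :: u, hured.cons h3⟩⟧ := by
    rw [phi_of_cancel hured hu]
    exact phi_of_no (l := ⟨u, hured⟩) h3
  rw [hLHS, hRHS]

lemma phi_comm {x y : A × Bool} (hadj : Γ.Adj x.1 y.1) (t : RW Γ) :
    phi x (phi y t) = phi y (phi x t) := by
  induction t using Quotient.ind with
  | _ l =>
    have hne : x.1 ≠ y.1 := Γ.ne_of_adj hadj
    by_cases hx : ∃ u, Sh Γ l.1 (bar x :: u) <;>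
      by_cases hy : ∃ v, Sh Γ l.1 (bar y :: v)
    · -- both cancel
      obtain ⟨u, hu⟩ := hx
      obtain ⟨v, hv⟩ := hy
      have hured : IsRed Γ u := red_of_sh_cons l.2 hu
      have hvred : IsRed Γ v := red_of_sh_cons l.2 hv
      have hvu : Sh Γ (bar y :: v) (bar x :: u) := hv.symm.trans hu
      obtain ⟨l₁, l₂, heq, hcom, hsh⟩ := sh_cons_split hvu
      match l₁, heq with
      | [], heq =>
        rw [List.nil_append] at heq
        exact absurd (congrArg Prod.fst (List.cons_eq_cons.mp heq).1) (by simpa using hne.symm)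
      | z :: l₁', heq =>
        rw [List.cons_append] at heq
        obtain ⟨rfl, hv2⟩ := List.cons_eq_cons.mp heq
        have hcom' : ∀ w ∈ l₁', Γ.Adj x.1 w.1 := fun w hw => hcom w (List.mem_cons_of_mem _ hw)
        have hmu : Sh Γ u (bar y :: (l₁' ++ l₂)) := by
          refine Sh.symm ?_
          have : (bar y :: l₁') ++ l₂ = bar y :: (l₁' ++ l₂) := rfl
          exact this ▸ hsh
        have hmred : IsRed Γ (l₁' ++ l₂) := red_of_sh_cons hured hmu
        have hvm : Sh Γ v (bar x :: (l₁' ++ l₂)) := by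
          rw [hv2]
          exact sh_to_front hcom'
        rw [phi_of_cancel hvred hv, phi_of_cancel hured hu,
          phi_of_cancel (l := ⟨v, hvred⟩) hmred hvm,
          phi_of_cancel (l := ⟨u, hured⟩) hmred hmu]
    · exact phi_comm_os hadj l hx hy
    · exact (phi_comm_os hadj.symm l hy hx).symm
    · have hyl : IsRed Γ (y :: l.1) := l.2.cons hy
      have hxl : IsRed Γ (x :: l.1) := l.2.cons hx
      have hx' : ¬ ∃ u, Sh Γ (y :: l.1) (bar x :: u) := by
        rw [cancel_cons_iff hadj]
        exact hx
      have hy' : ¬ ∃ v, Sh Γ (x :: l.1) (bar y :: v) := by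
        rw [cancel_cons_iff hadj.symm]
        exact hy
      rw [phi_of_no hy, phi_of_no hx, phi_of_no (l := ⟨y :: l.1, hyl⟩) hx',
        phi_of_no (l := ⟨x :: l.1, hxl⟩) hy']
      refine sub_eq_quot_eq ?_
      have := Step.swap (Γ := Γ) [] l.1 x y hadj
      simpa using this.sh

open scoped commutatorElement

variable (Γ) in
/-- The action of the RAAG on reduced words. -/
noncomputable def act : RAAG Γ →* Equiv.Perm (RW Γ) :=
  PresentedGroup.toGroup (f := fun a => phiEquiv Γ (a, true)) (by
    rintro r ⟨a, b, hab, rfl⟩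
    have hc : Commute (phiEquiv Γ (a, true)) (phiEquiv Γ (b, true)) := by
      apply Equiv.ext
      intro t
      simp only [Equiv.Perm.mul_apply]
      exact phi_comm (x := (a, true)) (y := (b, true)) hab t
    simp only [map_mul, map_inv, FreeGroup.lift_apply_of]
    rw [show phiEquiv Γ (a, true) * phiEquiv Γ (b, true) * (phiEquiv Γ (a, true))⁻¹ *
        (phiEquiv Γ (b, true))⁻¹ = ⁅phiEquiv Γ (a, true), phiEquiv Γ (b, true)⁆ from rfl,
      commutatorElement_eq_one_iff_commute]
    exact hc)

lemma phiEquiv_apply (x : A × Bool) (t : RW Γ) : phiEquiv Γ x t = phi x t := rfl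

lemma phiEquiv_inv_apply (x : A × Bool) (t : RW Γ) : (phiEquiv Γ x)⁻¹ t = phi (bar x) t := rfl

lemma act_genP (x : A × Bool) (t : RW Γ) : act Γ (genP Γ x) t = phi x t := by
  obtain ⟨a, ε⟩ := x
  cases ε
  · have h1 : genP Γ (a, false) = (raagGen Γ a)⁻¹ := by simp [genP]
    rw [h1, map_inv]
    have h2 : act Γ (raagGen Γ a) = phiEquiv Γ (a, true) :=
      PresentedGroup.toGroup.of _
    rw [h2]
    have : bar (a, true) = (a, false) := rfl
    rw [phiEquiv_inv_apply, this]
  · have h1 : genP Γ (a, true) = raagGen Γ a := by simp [genP]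
    rw [h1]
    have h2 : act Γ (raagGen Γ a) = phiEquiv Γ (a, true) :=
      PresentedGroup.toGroup.of _
    rw [h2, phiEquiv_apply]

lemma act_mkW (l : W A) (t : RW Γ) : act Γ (mkW Γ l) t = l.foldr phi t := by
  induction l with
  | nil => rw [mkW_nil, map_one]; rfl
  | cons x l ih =>
    rw [mkW_cons, map_mul, Equiv.Perm.mul_apply, ih, List.foldr_cons, act_genP]

lemma foldr_phi_red {l : W A} (h : IsRed Γ l) :
    l.foldr phi (⟦⟨[], isRed_nil⟩⟧ : RW Γ) = ⟦⟨l, h⟩⟧ := by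
  induction l with
  | nil => rfl
  | cons x l ih =>
    rw [List.foldr_cons, ih h.tail, phi_of_no (l := ⟨l, h.tail⟩) h.no_front_cancel]

/-- Normal form theorem: two reduced words representing the same element are
shuffle-equivalent. -/
theorem red_unique {u v : W A} (hu : IsRed Γ u) (hv : IsRed Γ v) (h : mkW Γ u = mkW Γ v) :
    Sh Γ u v := by
  have h1 := congrArg (fun g : RAAG Γ => act Γ g (⟦⟨[], isRed_nil⟩⟧ : RW Γ)) h
  simp only [act_mkW] at h1
  rw [foldr_phi_red hu, foldr_phi_red hv] at h1
  exact Quotient.exact h1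

lemma IsRed.no_pair {l : W A} (h : IsRed Γ l) (p q : W A) (z : A × Bool) :
    l ≠ p ++ z :: (z.1, !z.2) :: q := by
  intro heq
  exact h ⟨p, q, z, heq ▸ Sh.rfl⟩

lemma reduce_eq_self_of_no_pair : ∀ {l : W A},
    (∀ (p q : W A) (z : A × Bool), l ≠ p ++ z :: (z.1, !z.2) :: q) → FreeGroup.reduce l = l := by
  intro l
  induction l with
  | nil => intro _; rfl
  | cons x t ih =>
    intro H
    have Ht : ∀ (p q : W A) (z : A × Bool), t ≠ p ++ z :: (z.1, !z.2) :: q := by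
      intro p q z heq
      exact H (x :: p) q z (by rw [heq]; rfl)
    rw [FreeGroup.reduce.cons, ih Ht]
    cases t with
    | nil => rfl
    | cons hd tl =>
      by_cases hcond : x.1 = hd.1 ∧ x.2 = !hd.2
      · exfalso
        have hhd : hd = (x.1, !x.2) := by
          obtain ⟨h1, h2⟩ := hcond
          have : hd.2 = !x.2 := by rw [h2, Bool.not_not]
          exact Prod.ext h1.symm this
        exact H [] tl x (by rw [List.nil_append, hhd])
      · simp only [if_neg hcond]

lemma IsRed.reduce_eq {l : W A} (h : IsRed Γ l) : FreeGroup.reduce l = l :=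
  reduce_eq_self_of_no_pair (fun p q z => h.no_pair p q z)

lemma mkW_toWord (w : FreeGroup A) : mkW Γ w.toWord = PresentedGroup.mk (raagRels Γ) w := by
  rw [mkW, FreeGroup.mk_toWord]

/-- the length of a reduced representative computes the length function -/
lemma len_red {r : W A} {g : RAAG Γ} (hr : IsRed Γ r) (hg : mkW Γ r = g) :
    raagLen Γ g = r.length := by
  have hmem : r.length ∈ {n | ∃ w : FreeGroup A,
      PresentedGroup.mk (raagRels Γ) w = g ∧ w.toWord.length = n} := by
    refine ⟨FreeGroup.mk r, hg, ?_⟩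
    rw [FreeGroup.toWord_mk, hr.reduce_eq]
  have hlb : ∀ n ∈ {n | ∃ w : FreeGroup A,
      PresentedGroup.mk (raagRels Γ) w = g ∧ w.toWord.length = n}, r.length ≤ n := by
    rintro n ⟨w, hw, hlen⟩
    have hgl : mkW Γ w.toWord = g := by rw [mkW_toWord, hw]
    obtain ⟨r', hr', hmk', hle, -⟩ := exists_red (Γ := Γ) w.toWord
    have hsh : Sh Γ r' r := red_unique hr' hr (by rw [hmk', hgl, hg])
    rw [← hlen, ← hsh.length]
    exact hle
  exact le_antisymm (Nat.sInf_le hmem) (le_csInf ⟨_, hmem⟩ hlb)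

lemma len_one : raagLen Γ (1 : RAAG Γ) = 0 :=
  len_red isRed_nil mkW_nil

lemma mkW_ne_one {r : W A} (hr : IsRed Γ r) (hne : r ≠ []) : mkW Γ r ≠ 1 := by
  intro h
  have := red_unique hr isRed_nil (by rw [h, mkW_nil])
  have hlen := this.length
  simp at hlen
  exact hne hlen

/-- the support is computed by any reduced representative -/
lemma supp_red {r : W A} {g : RAAG Γ} (hr : IsRed Γ r) (hg : mkW Γ r = g) :
    raagSupp Γ g = {a | a ∈ r.map Prod.fst} := by
  ext a
  constructor
  · rintro ⟨w, hmk, hlen, hmem⟩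
    have hgl : mkW Γ w.toWord = g := by rw [mkW_toWord, hmk]
    have hlr : raagLen Γ g = r.length := len_red hr hg
    have hred : IsRed Γ w.toWord := by
      by_contra hnred
      rw [IsRed, not_not] at hnred
      obtain ⟨p, q, x, hx⟩ := hnred
      have hmk2 : mkW Γ (p ++ q) = g := by
        rw [← hgl, hx.mkW_eq, mkW_append p q, mkW_append p (x :: bar x :: q), mkW_cancel]
      obtain ⟨r'', hr'', hmk'', hle'', -⟩ := exists_red (Γ := Γ) (p ++ q)
      have hsh : Sh Γ r'' r := red_unique hr'' hr (by rw [hmk'', hmk2, hg])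
      have h1 := hsh.length
      have h2 := hx.length
      rw [hlen, hlr] at h2
      simp only [List.length_append, List.length_cons] at h2
      rw [List.length_append] at hle''
      omega
    have hsh : Sh Γ w.toWord r := red_unique hred hr (by rw [hgl, hg])
    exact ((hsh.perm.map Prod.fst).mem_iff).mp hmem
  · intro ha
    refine ⟨FreeGroup.mk r, hg, ?_, ?_⟩
    · rw [FreeGroup.toWord_mk, hr.reduce_eq, len_red hr hg]
    · rw [FreeGroup.toWord_mk, hr.reduce_eq]
      exact ha

lemma mem_parabolic_of {Y : Set A} {l : W A} (h : ∀ z ∈ l, z.1 ∈ Y) :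
    mkW Γ l ∈ parabolic Γ Y := by
  induction l with
  | nil => rw [mkW_nil]; exact one_mem _
  | cons x t ih =>
    rw [mkW_cons]
    refine mul_mem ?_ (ih fun z hz => h z (List.mem_cons_of_mem _ hz))
    have hx : raagGen Γ x.1 ∈ parabolic Γ Y :=
      Subgroup.subset_closure ⟨x.1, h x (List.mem_cons_self), rfl⟩
    obtain ⟨a, ε⟩ := x
    cases ε
    · simpa [genP] using inv_mem hx
    · simpa [genP] using hx

lemma invRev_mem {l : W A} {z : A × Bool} (hz : z ∈ FreeGroup.invRev l) :
    ∃ w ∈ l, z.1 = w.1 := by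
  rw [FreeGroup.invRev] at hz
  rw [List.mem_reverse, List.mem_map] at hz
  obtain ⟨w, hw, hwz⟩ := hz
  exact ⟨w, hw, by rw [← hwz]⟩

lemma mkW_invRev (l : W A) : mkW Γ (FreeGroup.invRev l) = (mkW Γ l)⁻¹ := by
  rw [mkW, mkW, ← FreeGroup.inv_mk, map_inv]

lemma exists_red_rep_of_parabolic {Y : Set A} {g : RAAG Γ} (h : g ∈ parabolic Γ Y) :
    ∃ r : W A, IsRed Γ r ∧ mkW Γ r = g ∧ ∀ z ∈ r, z.1 ∈ Y := by
  have key : ∃ l : W A, mkW Γ l = g ∧ ∀ z ∈ l, z.1 ∈ Y := by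
    induction h using Subgroup.closure_induction with
    | mem x hx =>
      obtain ⟨a, ha, rfl⟩ := hx
      refine ⟨[(a, true)], ?_, by simpa using ha⟩
      rw [mkW_singleton]
      rfl
    | one => exact ⟨[], mkW_nil, by simp⟩
    | mul x y hx hy ihx ihy =>
      obtain ⟨lx, hlx, hmx⟩ := ihx
      obtain ⟨ly, hly, hmy⟩ := ihy
      refine ⟨lx ++ ly, by rw [mkW_append, hlx, hly], ?_⟩
      intro z hz
      rcases List.mem_append.mp hz with h | h
      · exact hmx z h
      · exact hmy z h
    | inv x hx ihx =>
      obtain ⟨lx, hlx, hmx⟩ := ihx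
      refine ⟨FreeGroup.invRev lx, by rw [mkW_invRev, hlx], ?_⟩
      intro z hz
      obtain ⟨w, hw, hwz⟩ := invRev_mem hz
      rw [hwz]
      exact hmx w hw
  obtain ⟨l, hl, hmem⟩ := key
  obtain ⟨r, hr, hmk, -, hsub⟩ := exists_red (Γ := Γ) l
  exact ⟨r, hr, by rw [hmk, hl], fun z hz => hmem z (hsub z hz)⟩

lemma genP_in_parabolic {Y : Set A} {x : A × Bool} (hx : x.1 ∈ Y) :
    mkW Γ [x] ∈ parabolic Γ Y :=
  mem_parabolic_of (by simpa using hx)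

lemma left_div_of_front {g : RAAG Γ} {rg s : W A} {x : A × Bool} (hrg : IsRed Γ rg)
    (hg : mkW Γ rg = g) (hsh : Sh Γ rg (x :: s)) : leftDivisor Γ (mkW Γ [x]) g := by
  have hxs : IsRed Γ (x :: s) := hrg.sh hsh
  refine ⟨mkW Γ s, ?_, ?_⟩
  · rw [← hg, hsh.mkW_eq, mkW_cons, mkW_singleton]
  · rw [len_red hrg hg, len_red (isRed_singleton x) rfl, len_red hxs.tail rfl, hsh.length]
    simp [Nat.add_comm]

lemma right_div_of_back {g : RAAG Γ} {rg t : W A} {x : A × Bool} (hrg : IsRed Γ rg)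
    (hg : mkW Γ rg = g) (hsh : Sh Γ rg (t ++ [x])) : rightDivisor Γ (mkW Γ [x]) g := by
  have hxs : IsRed Γ (t ++ [x]) := hrg.sh hsh
  refine ⟨mkW Γ t, ?_, ?_⟩
  · rw [← hg, hsh.mkW_eq, mkW_append]
  · rw [len_red hrg hg, len_red (isRed_singleton x) rfl, len_red hxs.prefix rfl, hsh.length]
    simp

lemma commute_mkW {h : RAAG Γ} {l : W A} (hc : ∀ z ∈ l, Commute h (genP Γ z)) :
    Commute h (mkW Γ l) := by
  induction l with
  | nil => rw [mkW_nil]; exact Commute.one_right h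
  | cons x t ih =>
    rw [mkW_cons]
    exact (hc x (List.mem_cons_self)).mul_right (ih fun z hz => hc z (List.mem_cons_of_mem _ hz))

lemma main_aux {Y : Set A} {g : RAAG Γ} {rg : W A} (hrg : IsRed Γ rg) (hg : mkW Γ rg = g)
    (hl : ∀ u ∈ parabolic Γ Y, u ≠ 1 → ¬ leftDivisor Γ u g)
    (hr : ∀ u ∈ parabolic Γ Y, u ≠ 1 → ¬ rightDivisor Γ u g) :
    ∀ rw : W A, IsRed Γ rw → (∀ z ∈ rw, z.1 ∈ Y) → g⁻¹ * mkW Γ rw * g ∈ parabolic Γ Y →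
      ∀ y ∈ rw, ∀ x ∈ rg, Commute (raagGen Γ x.1) (raagGen Γ y.1) := by
  intro rw
  induction rw with
  | nil => intro _ _ _ y hy; exact absurd hy List.not_mem_nil
  | cons y rt ih =>
    intro hrwred hbases hc y' hy' x hx
    have hyY : y.1 ∈ Y := hbases y (List.mem_cons_self)
    obtain ⟨rw', hrw'red, hrw'mk, hrw'Y⟩ := exists_red_rep_of_parabolic hc
    -- `rw ++ rg` is reduced
    have hA : IsRed Γ ((y :: rt) ++ rg) := by
      rcases append_red_or_cancel _ hrwred _ hrg with h | ⟨x0, t0, s0, hsh1, hsh2⟩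
      · exact h
      · exfalso
        have hx0Y : x0.1 ∈ Y := by
          have hmem : x0 ∈ y :: rt := (hsh1.perm.mem_iff).mpr (by simp)
          exact hbases x0 hmem
        refine hl _ (genP_in_parabolic (x := bar x0) (by simpa using hx0Y))
          (mkW_ne_one (isRed_singleton _) (by simp)) ?_
        exact left_div_of_front hrg hg hsh2
    -- `rg ++ rw'` is reduced
    have hA' : IsRed Γ (rg ++ rw') := by
      rcases append_red_or_cancel _ hrg _ hrw'red with h | ⟨x0, t0, s0, hsh1, hsh2⟩
      · exact h
      · exfalso
        have hx0Y : x0.1 ∈ Y := by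
          have hmem : bar x0 ∈ rw' := (hsh2.perm.mem_iff).mpr (by simp)
          simpa using hrw'Y _ hmem
        refine hr _ (genP_in_parabolic hx0Y)
          (mkW_ne_one (isRed_singleton _) (by simp)) ?_
        exact right_div_of_back hrg hg hsh1
    -- the two reduced words represent the same element
    have heqg : mkW Γ ((y :: rt) ++ rg) = mkW Γ (rg ++ rw') := by
      rw [mkW_append, mkW_append, hg, hrw'mk]
      group
    have hsh : Sh Γ (rg ++ rw') (y :: (rt ++ rg)) := red_unique hA' hA heqg.symm
    obtain ⟨l₁, l₂, heq2, hcom, -⟩ := sh_cons_split hsh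
    -- heq2 : rg ++ rw' = l₁ ++ y :: l₂
    have hadjall : ∀ z ∈ rg, Γ.Adj y.1 z.1 := by
      rcases List.append_eq_append_iff.mp heq2 with ⟨a', h1, h2⟩ | ⟨c', h1, h2⟩
      · -- l₁ = rg ++ a' : every letter of rg is adjacent to y
        intro z hz
        exact hcom z (h1 ▸ List.mem_append.mpr (Or.inl hz))
      · -- rg = l₁ ++ c'
        match c', h2 with
        | [], h2 =>
          rw [List.append_nil] at h1
          intro z hz
          exact hcom z (h1 ▸ hz)
        | y0 :: p, h2 =>
          exfalso
          rw [List.cons_append] at h2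
          obtain ⟨hy0, -⟩ := List.cons_eq_cons.mp h2
          subst hy0
          have hshy : Sh Γ rg (y :: (l₁ ++ p)) := by
            rw [h1]
            exact sh_to_front hcom
          exact hl _ (genP_in_parabolic hyY)
            (mkW_ne_one (isRed_singleton _) (by simp))
            (left_div_of_front hrg hg hshy)
    -- head-letter commutation
    have hhead : ∀ x' ∈ rg, Commute (raagGen Γ x'.1) (raagGen Γ y.1) :=
      fun x' hx' => (gen_comm (hadjall x' hx')).symm
    rcases List.mem_cons.mp hy' with rfl | hy'
    · exact hhead x hx
    · -- recurse on rt
      have hcg : Commute (genP Γ y) g := by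
        rw [← hg]
        exact commute_mkW (fun z hz => genP_comm (hadjall z hz))
      have hcinv : g⁻¹ * (genP Γ y)⁻¹ = (genP Γ y)⁻¹ * g⁻¹ := (hcg.inv_inv).eq.symm
      have hc2 : g⁻¹ * mkW Γ rt * g ∈ parabolic Γ Y := by
        have h3 : mkW Γ rt = (genP Γ y)⁻¹ * mkW Γ (y :: rt) := by
          rw [mkW_cons]
          group
        rw [h3]
        have e : g⁻¹ * ((genP Γ y)⁻¹ * mkW Γ (y :: rt)) * g
            = (genP Γ y)⁻¹ * (g⁻¹ * mkW Γ (y :: rt) * g) := by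
          calc g⁻¹ * ((genP Γ y)⁻¹ * mkW Γ (y :: rt)) * g
              = (g⁻¹ * (genP Γ y)⁻¹) * (mkW Γ (y :: rt) * g) := by group
            _ = ((genP Γ y)⁻¹ * g⁻¹) * (mkW Γ (y :: rt) * g) := by rw [hcinv]
            _ = (genP Γ y)⁻¹ * (g⁻¹ * mkW Γ (y :: rt) * g) := by group
        rw [e]
        refine mul_mem (inv_mem ?_) hc
        have : genP Γ y = mkW Γ [y] := (mkW_singleton y).symm
        rw [this]
        exact genP_in_parabolic hyY
      exact ih hrwred.tail (fun z hz => hbases z (List.mem_cons_of_mem _ hz)) hc2 y' hy' x hx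

end RaagNF

/-- If `w ∈ ⟨Y⟩`, `g⁻¹ w g ∈ ⟨Y⟩` and `g` has no nontrivial left or right divisor in `⟨Y⟩`,
then every generator in the support of `g` commutes with every generator in the support
of `w`. -/
theorem raag_supp_commute_of_conj_mem_parabolic {A : Type*} [DecidableEq A]
    (Γ : SimpleGraph A) (Y : Set A) (w g : RAAG Γ)
    (hw : w ∈ parabolic Γ Y) (hc : g⁻¹ * w * g ∈ parabolic Γ Y)
    (hl : ∀ u ∈ parabolic Γ Y, u ≠ 1 → ¬ leftDivisor Γ u g)
    (hr : ∀ u ∈ parabolic Γ Y, u ≠ 1 → ¬ rightDivisor Γ u g) :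
    ∀ x ∈ raagSupp Γ g, ∀ y ∈ raagSupp Γ w, Commute (raagGen Γ x) (raagGen Γ y) := by
  
  classical
  intro x hx y hy
  obtain ⟨wg, hwg⟩ := PresentedGroup.mk_surjective (raagRels Γ) g
  obtain ⟨rg, hrgred, hrgmk, -, -⟩ := RaagNF.exists_red (Γ := Γ) wg.toWord
  have hgrep : RaagNF.mkW Γ rg = g := by rw [hrgmk, RaagNF.mkW_toWord, hwg]
  obtain ⟨rw', hrwred, hrwmk, hrwY⟩ := RaagNF.exists_red_rep_of_parabolic hw
  rw [RaagNF.supp_red hrgred hgrep] at hx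
  rw [RaagNF.supp_red hrwred hrwmk] at hy
  obtain ⟨xu, hxu, hxufst⟩ := List.mem_map.mp hx
  obtain ⟨yu, hyu, hyufst⟩ := List.mem_map.mp hy
  have hcom := RaagNF.main_aux hrgred hgrep hl hr rw' hrwred hrwY
    (by rw [hrwmk]; exact hc) yu hyu xu hxu
  rw [hxufst, hyufst] at hcom
  exact hcom
end

section
/- Let Γ be a finite simple graph with vertex set A and G = G(Γ) the right-angled Artin group. Let Y ⊆ A be a clique, and let w, g ∈ G be such that both w and g⁻¹wg lie in ⟨Y⟩. Then every element of supp(g) commutes with every element of supp(w). -/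
namespace RaagAux

open scoped Classical

variable {A : Type*} {Γ : SimpleGraph A}

/-- The canonical projection from the free group. -/
abbrev mkR (Γ : SimpleGraph A) : FreeGroup A →* RAAG Γ := PresentedGroup.mk (raagRels Γ)

@[simp] lemma mkR_of (a : A) : mkR Γ (FreeGroup.of a) = raagGen Γ a := rfl

/-- Lift a vertex map with commuting images to a homomorphism out of the RAAG. -/
def raagLift {G : Type*} [Group G] (f : A → G)
    (hf : ∀ a b, Γ.Adj a b → Commute (f a) (f b)) : RAAG Γ →* G :=
  PresentedGroup.toGroup (f := f) (by
    rintro r ⟨x, y, hxy, rfl⟩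
    simp only [map_mul, map_inv, FreeGroup.lift_apply_of]
    have h := (hf x y hxy).eq
    rw [h]
    group)

@[simp] lemma raagLift_gen {G : Type*} [Group G] (f : A → G)
    (hf : ∀ a b, Γ.Adj a b → Commute (f a) (f b)) (a : A) :
    raagLift f hf (raagGen Γ a) = f a :=
  PresentedGroup.toGroup.of _

lemma raag_adj_commute {a b : A} (h : Γ.Adj a b) :
    Commute (raagGen Γ a) (raagGen Γ b) := by
  have h1 : mkR Γ (FreeGroup.of a * FreeGroup.of b * (FreeGroup.of a)⁻¹ * (FreeGroup.of b)⁻¹)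
      = 1 := by
    apply (QuotientGroup.eq_one_iff _).2
    exact Subgroup.subset_normalClosure ⟨a, b, h, rfl⟩
  simp only [map_mul, map_inv, mkR_of] at h1
  have h2 : raagGen Γ a * raagGen Γ b * (raagGen Γ a)⁻¹ = raagGen Γ b :=
    mul_inv_eq_one.mp h1
  have h3 : raagGen Γ a * raagGen Γ b = raagGen Γ b * raagGen Γ a :=
    mul_inv_eq_iff_eq_mul.mp h2
  exact h3

/-- The image under a hom of every element lies in `K` if the images of generators do. -/
lemma raagHom_mem {G : Type*} [Group G] (f : RAAG Γ →* G) (K : Subgroup G)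
    (hgen : ∀ a : A, f (raagGen Γ a) ∈ K) (x : RAAG Γ) : f x ∈ K := by
  have := PresentedGroup.generated_by (raagRels Γ) (K.comap f) hgen x
  exact this

lemma parabolic_mono {S T : Set A} (h : S ⊆ T) : parabolic Γ S ≤ parabolic Γ T :=
  Subgroup.closure_mono (Set.image_mono h)

/-- The retraction of the RAAG onto the parabolic on `T`, killing generators outside `T`. -/
noncomputable def paraRetr (Γ : SimpleGraph A) (T : Set A) : RAAG Γ →* RAAG Γ :=
  raagLift (fun a => if a ∈ T then raagGen Γ a else 1) (by
    intro a b hab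
    by_cases ha : a ∈ T <;> by_cases hb : b ∈ T <;>
      simp [ha, hb, raag_adj_commute hab, Commute.one_left, Commute.one_right])

lemma paraRetr_fix {T : Set A} {h : RAAG Γ} (hh : h ∈ parabolic Γ T) :
    paraRetr Γ T h = h := by
  induction hh using Subgroup.closure_induction with
  | mem x hx => obtain ⟨a, ha, rfl⟩ := hx; simp [paraRetr, ha]
  | one => simp
  | mul x y _ _ hx hy => simp [map_mul, hx, hy]
  | inv x _ hx => simp [map_inv, hx]

/-- The free-group-level kill map. -/
noncomputable def killF (T : Set A) : FreeGroup A →* FreeGroup A :=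
  FreeGroup.lift (fun a => if a ∈ T then FreeGroup.of a else 1)

lemma mkR_killF (T : Set A) (x : FreeGroup A) :
    mkR Γ (killF T x) = paraRetr Γ T (mkR Γ x) := by
  have : (mkR Γ).comp (killF T) = (paraRetr Γ T).comp (mkR Γ) := by
    apply FreeGroup.ext_hom
    intro a
    by_cases ha : a ∈ T <;>
      simp [killF, paraRetr, ha]
  exact DFunLike.congr_fun this x

variable [DecidableEq A]

lemma killF_norm_le (T : Set A) (L : List (A × Bool)) :
    (killF T (FreeGroup.mk L)).norm ≤ L.countP (fun p => decide (p.1 ∈ T)) := by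
  induction L with
  | nil =>
      simp [FreeGroup.one_eq_mk.symm]
  | cons p L ih =>
      have hsplit : FreeGroup.mk (p :: L) = FreeGroup.mk [p] * FreeGroup.mk L := by
        rw [FreeGroup.mul_mk]; rfl
      rw [hsplit, map_mul]
      refine le_trans (FreeGroup.norm_mul_le _ _) ?_
      have h1 : (killF T (FreeGroup.mk [p])).norm ≤ (if p.1 ∈ T then 1 else 0) := by
        have hofp : FreeGroup.mk [p] = if p.2 then FreeGroup.of p.1 else (FreeGroup.of p.1)⁻¹ := by
          rcases p with ⟨a, b⟩
          cases b
          · rw [if_neg (by simp)]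
            have : FreeGroup.of a = FreeGroup.mk [(a, true)] := rfl
            rw [this, FreeGroup.inv_mk]
            rfl
          · rw [if_pos rfl]; rfl
        rcases p with ⟨a, b⟩
        by_cases ha : a ∈ T
        · cases b <;>
            simp [hofp, killF, ha, FreeGroup.norm_inv_eq, FreeGroup.norm_of]
        · cases b <;> simp [hofp, killF, ha, FreeGroup.norm_inv_eq, FreeGroup.norm_one]
      rw [List.countP_cons]
      rcases p with ⟨a, b⟩
      by_cases ha : a ∈ T <;>
        simp only [ha, if_true, if_false, decide_eq_true_eq] at h1 ⊢ <;> omega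

lemma countP_lt_of_mem {β : Type*} {L : List β} {p : β → Bool} {a : β}
    (ha : a ∈ L) (hpa : p a = false) : L.countP p < L.length := by
  induction L with
  | nil => cases ha
  | cons b L ih =>
      rw [List.countP_cons, List.length_cons]
      rcases List.mem_cons.1 ha with rfl | ha'
      · have := List.countP_le_length (l := L) (p := p)
        rw [hpa]
        simp only [if_false, Bool.false_eq_true]
        omega
      · have := ih ha'
        have hb : (if p b then 1 else 0) ≤ 1 := by split <;> omega
        omega

lemma raagLen_le (g : RAAG Γ) (x : FreeGroup A) (hx : mkR Γ x = g) :
    raagLen Γ g ≤ x.norm :=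
  Nat.sInf_le ⟨x, hx, rfl⟩

/-- Key support lemma: supports of elements of parabolics are contained in the defining set. -/
lemma supp_subset_of_mem_parabolic {T : Set A} {h : RAAG Γ} (hh : h ∈ parabolic Γ T) :
    raagSupp Γ h ⊆ T := by
  intro a ha
  by_contra haT
  obtain ⟨v, hv, hlen, hmem⟩ := ha
  obtain ⟨p, hpv, hpa⟩ := List.mem_map.1 hmem
  have hkill : mkR Γ (killF T v) = h := by
    rw [mkR_killF, hv, paraRetr_fix hh]
  have h1 : raagLen Γ h ≤ (killF T v).norm := raagLen_le _ _ hkill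
  have h2 : (killF T v).norm ≤ v.toWord.countP (fun p => decide (p.1 ∈ T)) := by
    have := killF_norm_le (A := A) T v.toWord
    rwa [FreeGroup.mk_toWord] at this
  have h3 : v.toWord.countP (fun p => decide (p.1 ∈ T)) < v.toWord.length :=
    countP_lt_of_mem hpv (by simp [haT, hpa])
  omega

end RaagAux

section PartB
namespace RaagAux

variable {A : Type*} {Γ : SimpleGraph A}

/-- Abelianization-type homomorphism recording exponent sums. -/
noncomputable def piAb (Γ : SimpleGraph A) : RAAG Γ →* Multiplicative (A →₀ ℤ) :=
  raagLift (fun a => Multiplicative.ofAdd (Finsupp.single a 1)) (fun _ _ _ => Commute.all _ _)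

@[simp] lemma piAb_gen (a : A) :
    piAb Γ (raagGen Γ a) = Multiplicative.ofAdd (Finsupp.single a 1) := by
  simp [piAb]

lemma piAb_conj (u w : RAAG Γ) : piAb Γ (u⁻¹ * w * u) = piAb Γ w := by
  rw [map_mul, map_mul, map_inv, mul_comm ((piAb Γ u)⁻¹) (piAb Γ w), mul_assoc,
    inv_mul_cancel, mul_one]

lemma piAb_support {S : Set A} {h : RAAG Γ} (hh : h ∈ parabolic Γ S) :
    ∀ a ∉ S, (piAb Γ h).toAdd a = 0 := by
  induction hh using Subgroup.closure_induction with
  | mem x hx =>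
      obtain ⟨b, hb, rfl⟩ := hx
      intro a ha
      simp [Finsupp.single_apply_eq_zero]
      rintro rfl
      exact absurd hb ha
  | one => intro a _; simp
  | mul x y _ _ hx hy =>
      intro a ha
      rw [map_mul]
      simp only [toAdd_mul, Finsupp.add_apply, hx a ha, hy a ha, add_zero]
  | inv x _ hx =>
      intro a ha
      rw [map_inv]
      simp only [toAdd_inv, Finsupp.neg_apply, hx a ha, neg_zero]

section Clique

open scoped Classical

variable (Y : Set A)

lemma clique_comm (hY : ∀ x ∈ Y, ∀ y ∈ Y, x ≠ y → Γ.Adj x y) :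
    ∀ x ∈ raagGen Γ '' Y, ∀ y ∈ raagGen Γ '' Y, x * y = y * x := by
  rintro _ ⟨a, ha, rfl⟩ _ ⟨b, hb, rfl⟩
  by_cases hab : a = b
  · subst hab; rfl
  · exact (raag_adj_commute (hY a ha b hb hab)).eq

/-- Canonical generator as an element of the parabolic, or 1. -/
noncomputable def eGen (a : A) : ↥(parabolic Γ Y) :=
  if h : a ∈ Y then (⟨raagGen Γ a, Subgroup.subset_closure ⟨a, h, rfl⟩⟩ : ↥(parabolic Γ Y))
  else 1

variable (hY : ∀ x ∈ Y, ∀ y ∈ Y, x ≠ y → Γ.Adj x y)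

/-- The canonical element of a clique parabolic with given exponents. -/
noncomputable def cliqueElt (f : A →₀ ℤ) : ↥(parabolic Γ Y) :=
  letI : CommGroup ↥(parabolic Γ Y) := Subgroup.closureCommGroupOfComm (clique_comm Y hY)
  f.prod fun a n => eGen Y a ^ n

lemma cliqueElt_add (f g : A →₀ ℤ) :
    cliqueElt Y hY (f + g) = cliqueElt Y hY f * cliqueElt Y hY g := by
  letI : CommGroup ↥(parabolic Γ Y) := Subgroup.closureCommGroupOfComm (clique_comm Y hY)
  unfold cliqueElt
  exact Finsupp.prod_add_index' (fun a => zpow_zero _) (fun a m n => zpow_add _ m n)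

lemma cliqueElt_zero : cliqueElt Y hY 0 = 1 := by
  letI : CommGroup ↥(parabolic Γ Y) := Subgroup.closureCommGroupOfComm (clique_comm Y hY)
  unfold cliqueElt
  exact Finsupp.prod_zero_index

lemma cliqueElt_neg (f : A →₀ ℤ) : cliqueElt Y hY (-f) = (cliqueElt Y hY f)⁻¹ := by
  have h := cliqueElt_add Y hY f (-f)
  rw [add_neg_cancel, cliqueElt_zero] at h
  exact (inv_eq_of_mul_eq_one_right h.symm).symm

lemma cliqueElt_single {a : A} (ha : a ∈ Y) :
    (cliqueElt Y hY (Finsupp.single a 1) : RAAG Γ) = raagGen Γ a := by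
  letI : CommGroup ↥(parabolic Γ Y) := Subgroup.closureCommGroupOfComm (clique_comm Y hY)
  unfold cliqueElt
  rw [Finsupp.prod_single_index (h := fun a n => eGen Y a ^ n) (zpow_zero _)]
  simp [eGen, ha]

/-- Every element of a clique parabolic is the canonical product of its exponent sums. -/
lemma mem_clique_parabolic_eq {h : RAAG Γ} (hh : h ∈ parabolic Γ Y) :
    (cliqueElt Y hY (piAb Γ h).toAdd : RAAG Γ) = h := by
  induction hh using Subgroup.closure_induction with
  | mem x hx =>
      obtain ⟨b, hb, rfl⟩ := hx
      rw [piAb_gen]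
      exact cliqueElt_single Y hY hb
  | one =>
      rw [map_one]
      have : ((1 : Multiplicative (A →₀ ℤ))).toAdd = 0 := rfl
      rw [this, cliqueElt_zero]
      rfl
  | mul x y _ _ hx hy =>
      rw [map_mul]
      have : ((piAb Γ x * piAb Γ y)).toAdd = (piAb Γ x).toAdd + (piAb Γ y).toAdd := rfl
      rw [this, cliqueElt_add]
      push_cast
      rw [hx, hy]
  | inv x _ hx =>
      rw [map_inv]
      have : ((piAb Γ x)⁻¹).toAdd = -(piAb Γ x).toAdd := rfl
      rw [this, cliqueElt_neg]
      push_cast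
      rw [hx]

/-- The canonical product avoids any vertex with zero exponent. -/
lemma cliqueElt_mem_parabolic (f : A →₀ ℤ) {y : A} (hfy : f y = 0) :
    (cliqueElt Y hY f : RAAG Γ) ∈ parabolic Γ (Y \ {y}) := by
  letI : CommGroup ↥(parabolic Γ Y) := Subgroup.closureCommGroupOfComm (clique_comm Y hY)
  have : cliqueElt Y hY f ∈ (parabolic Γ (Y \ {y})).comap (parabolic Γ Y).subtype := by
    unfold cliqueElt
    rw [Finsupp.prod]
    apply Subgroup.prod_mem
    intro a haf
    apply Subgroup.zpow_mem
    rw [Subgroup.mem_comap]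
    unfold eGen
    by_cases haY : a ∈ Y
    · rw [dif_pos haY]
      have hay : a ≠ y := by
        rintro rfl
        exact (Finsupp.mem_support_iff.1 haf) hfy
      exact Subgroup.subset_closure ⟨a, ⟨haY, hay⟩, rfl⟩
    · rw [dif_neg haY]
      simp [Subgroup.one_mem]
  rwa [Subgroup.mem_comap] at this

variable [DecidableEq A]

/-- A vertex in the support of a clique-parabolic element has nonzero exponent sum. -/
lemma exp_ne_zero_of_mem_supp (hY : ∀ x ∈ Y, ∀ y ∈ Y, x ≠ y → Γ.Adj x y)
    {w : RAAG Γ} (hw : w ∈ parabolic Γ Y) {y : A}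
    (hy : y ∈ raagSupp Γ w) : (piAb Γ w).toAdd y ≠ 0 := by
  intro h0
  have hmem : w ∈ parabolic Γ (Y \ {y}) := by
    have := cliqueElt_mem_parabolic Y hY ((piAb Γ w).toAdd) h0
    rwa [mem_clique_parabolic_eq Y hY hw] at this
  have := supp_subset_of_mem_parabolic hmem hy
  exact this.2 rfl

end Clique
end RaagAux
end PartB

section PartC
namespace RaagAux
open Monoid Monoid.PushoutI Monoid.PushoutI.NormalWord

variable {ι : Type*} {G : ι → Type*} [∀ i, Group (G i)] {H : Type*} [Group H]
  {φ : ∀ i, H →* G i}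

/-- Product of a list of letters in the pushout. -/
def prodL (φ : ∀ i, H →* G i) (L : List (Σ j, G j)) : PushoutI φ :=
  (L.map fun l => PushoutI.of l.1 l.2).prod

@[simp] lemma prodL_nil : prodL φ [] = 1 := rfl

@[simp] lemma prodL_cons (l : Σ j, G j) (L : List (Σ j, G j)) :
    prodL φ (l :: L) = PushoutI.of l.1 l.2 * prodL φ L := by
  simp [prodL]

lemma prodL_append (L M : List (Σ j, G j)) :
    prodL φ (L ++ M) = prodL φ L * prodL φ M := by
  simp [prodL]

/-- Reduced lists: adjacent letters from distinct groups, no letter in the base. -/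
def RW (φ : ∀ i, H →* G i) (L : List (Σ j, G j)) : Prop :=
  L.Chain' (fun l l' => l.1 ≠ l'.1) ∧ ∀ l ∈ L, l.2 ∉ (φ l.1).range

variable [DecidableEq ι] [∀ i, DecidableEq (G i)] {d : Transversal φ}

/-- Normal form existence for (reduced word) * (base element). -/
lemma exists_normalWord (L : List (Σ j, G j)) (hL : RW φ L) (h' : H) :
    ∃ w : NormalWord d, w.prod = prodL φ L * base φ h' ∧
      w.toList.map Sigma.fst = L.map Sigma.fst := by
  induction L with
  | nil =>
      refine ⟨⟨Monoid.CoprodI.Word.empty, h', ?_⟩, ?_, rfl⟩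
      · intro i g hg; cases hg
      · simp [NormalWord.prod, Monoid.CoprodI.Word.empty, Monoid.CoprodI.Word.prod]
  | cons l L ih =>
      have hL' : RW φ L :=
        ⟨(List.isChain_cons.mp hL.1).2, fun x hx => hL.2 x (List.mem_cons_of_mem _ hx)⟩
      obtain ⟨w, hw, hmap⟩ := ih hL'
      have hmw : w.fstIdx ≠ some l.1 := by
        intro hidx
        have h1 : w.toList.head?.map Sigma.fst = some l.1 := hidx
        rw [← List.head?_map, hmap, List.head?_map] at h1
        obtain ⟨x, hxL, hx⟩ := Option.map_eq_some_iff.mp h1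
        exact (List.isChain_cons.mp hL.1).1 x hxL hx.symm
      have hgr : l.2 ∉ (φ l.1).range := hL.2 l List.mem_cons_self
      refine ⟨cons l.2 w hmw hgr, ?_, ?_⟩
      · rw [prod_cons, hw, prodL_cons, mul_assoc]
      · simp only [cons, Monoid.CoprodI.Word.cons, List.map_cons, hmap]

end RaagAux
end PartC

section PartD
namespace RaagAux
open Monoid Monoid.PushoutI Monoid.PushoutI.NormalWord

variable {ι : Type*} {G : ι → Type*} [∀ i, Group (G i)] {H : Type*} [Group H]
  {φ : ∀ i, H →* G i}

variable [DecidableEq ι] [∀ i, DecidableEq (G i)]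

set_option linter.unusedSectionVars false

/-- The fst-lists of two reduced-word-times-base decompositions of an element agree. -/
lemma fst_list_unique (d : Transversal φ) {L M : List (Σ j, G j)} (hL : RW φ L) (hM : RW φ M)
    {h h' : H} (heq : prodL φ L * base φ h = prodL φ M * base φ h') :
    L.map Sigma.fst = M.map Sigma.fst := by
  obtain ⟨w1, hw1, hmap1⟩ := exists_normalWord (d := d) L hL h
  obtain ⟨w2, hw2, hmap2⟩ := exists_normalWord (d := d) M hM h'
  have : w1 = w2 := prod_injective (by rw [hw1, hw2, heq])
  rw [← hmap1, ← hmap2, this]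

/-- MKS-style conjugacy lemma: if a reduced word conjugates `of i a` into the image of `G i`,
and `a` is not conjugate in `G i` into the base, then the word lies in the image of `G i`. -/
lemma conjL (d : Transversal φ) (i : ι) (L : List (Σ j, G j)) (hL : RW φ L) (a : G i)
    (ha : ∀ c : G i, c⁻¹ * a * c ∉ (φ i).range)
    (hconj : (prodL φ L)⁻¹ * PushoutI.of i a * prodL φ L ∈ (PushoutI.of (φ := φ) i).range) :
    prodL φ L ∈ (PushoutI.of (φ := φ) i).range := by
  induction L generalizing a with
  | nil => exact ⟨1, by simp⟩
  | cons l L ih =>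
      have hL' : RW φ L :=
        ⟨(List.isChain_cons.mp hL.1).2, fun x hx => hL.2 x (List.mem_cons_of_mem _ hx)⟩
      obtain ⟨j, g₁⟩ := l
      by_cases hji : j = i
      · -- first letter from G i : recurse
        subst hji
        have hconj' : (prodL φ L)⁻¹ * PushoutI.of j (g₁⁻¹ * a * g₁) * prodL φ L ∈
            (PushoutI.of (φ := φ) j).range := by
          obtain ⟨b, hb⟩ := hconj
          refine ⟨b, ?_⟩
          rw [hb, prodL_cons]
          simp only [map_mul, map_inv]
          group
        have ha' : ∀ c : G j, c⁻¹ * (g₁⁻¹ * a * g₁) * c ∉ (φ j).range := by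
          intro c hc
          have : (g₁ * c)⁻¹ * a * (g₁ * c) ∈ (φ j).range := by
            rw [mul_inv_rev]
            convert hc using 1
            group
          exact ha (g₁ * c) this
        obtain ⟨c, hc⟩ := ih hL' (g₁⁻¹ * a * g₁) ha' hconj'
        exact ⟨g₁ * c, by rw [map_mul, hc, prodL_cons]⟩
      · -- first letter not from G i : impossible
        exfalso
        obtain ⟨b, hb⟩ := hconj
        set L₀ := (⟨j, g₁⟩ : Σ j, G j) :: L with hL₀
        have hE : prodL φ (⟨i, a⟩ :: L₀) * base φ 1 = prodL φ L₀ * PushoutI.of i b := by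
          rw [map_one, mul_one, prodL_cons, hb]
          group
        have hRWa : RW φ (⟨i, a⟩ :: L₀) := by
          constructor
          · refine List.isChain_cons.mpr ⟨?_, hL.1⟩
            intro y hy
            rw [hL₀] at hy
            simp only [List.head?_cons, Option.mem_def, Option.some.injEq] at hy
            subst hy
            exact fun h => hji (Eq.symm h)
          · intro x hx
            rcases List.mem_cons.1 hx with rfl | hx'
            · simpa using ha 1
            · exact hL.2 x hx'
        by_cases hbr : b ∈ (φ i).range
        · obtain ⟨c, hc⟩ := hbr
          have hE' : prodL φ (⟨i, a⟩ :: L₀) * base φ 1 = prodL φ L₀ * base φ c := by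
            rw [hE, ← hc, of_apply_eq_base]
          have := fst_list_unique d hRWa hL hE'
          have hlen := congrArg List.length this
          simp at hlen
        · -- b not in base range; consider the last letter of L₀
          obtain ⟨M, m, hM⟩ : ∃ M m, L₀ = M ++ [m] := by
            rcases List.eq_nil_or_concat' L₀ with h | ⟨M, m, hMm⟩
            · simp [hL₀] at h
            · exact ⟨M, m, hMm⟩
          have hchain0 : List.Chain' (fun l l' : Σ j, G j => l.1 ≠ l'.1) (M ++ [m]) := by
            rw [← hM, hL₀]; exact hL.1
          obtain ⟨hcM, -, hjunc⟩ := List.isChain_append.mp hchain0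
          have hRWM : RW φ M := ⟨hcM, fun x hx => by
            have : x ∈ L₀ := by rw [hM]; exact List.mem_append_left _ hx
            rw [hL₀] at this
            exact hL.2 x this⟩
          obtain ⟨k, gn⟩ := m
          by_cases hmi : k = i
          · subst hmi
            have hEM : prodL φ ((⟨k, a⟩ : Σ j, G j) :: L₀) * base φ 1 =
                prodL φ M * PushoutI.of k (gn * b) := by
              rw [hE, hM, prodL_append, map_mul]
              simp [prodL, mul_assoc]
            by_cases hgb : gn * b ∈ (φ k).range
            · obtain ⟨c, hc⟩ := hgb
              have hE2 : prodL φ ((⟨k, a⟩ : Σ j, G j) :: L₀) * base φ 1 =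
                  prodL φ M * base φ c := by
                rw [hEM, ← hc, of_apply_eq_base]
              have hfst := fst_list_unique d hRWa hRWM hE2
              have hlen := congrArg List.length hfst
              simp [hM] at hlen
              omega
            · have hRW' : RW φ (M ++ [⟨k, gn * b⟩]) := by
                constructor
                · refine List.isChain_append.mpr ⟨hcM, List.isChain_singleton _, ?_⟩
                  intro x hx y hy
                  simp only [List.head?_cons, Option.mem_def, Option.some.injEq] at hy
                  subst hy
                  exact hjunc x hx ⟨k, gn⟩ rfl
                · intro x hx
                  rcases List.mem_append.1 hx with hx' | hx'
                  · exact hRWM.2 x hx'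
                  · simp only [List.mem_singleton] at hx'
                    subst hx'
                    exact hgb
              have hE2 : prodL φ ((⟨k, a⟩ : Σ j, G j) :: L₀) * base φ 1 =
                  prodL φ (M ++ [⟨k, gn * b⟩]) * base φ 1 := by
                rw [hEM, prodL_append]
                simp [prodL]
              have hfst := fst_list_unique d hRWa hRW' hE2
              have hX : (L₀.map Sigma.fst) = M.map Sigma.fst ++ [k] := by
                rw [hM]; simp
              rw [List.map_cons, hX] at hfst
              have hlen := congrArg List.length hfst
              simp at hlen
          · have hRW' : RW φ (L₀ ++ [⟨i, b⟩]) := by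
              constructor
              · refine List.isChain_append.mpr ⟨by rw [hL₀] at hL ⊢; exact hL.1,
                  List.isChain_singleton _, ?_⟩
                intro x hx y hy
                simp only [List.head?_cons, Option.mem_def, Option.some.injEq] at hy
                subst hy
                rw [hM, List.getLast?_concat] at hx
                simp only [Option.mem_def, Option.some.injEq] at hx
                subst hx
                exact hmi
              · intro x hx
                rcases List.mem_append.1 hx with hx' | hx'
                · rw [hL₀] at hx'; exact hL.2 x hx'
                · simp only [List.mem_singleton] at hx'
                  subst hx'
                  exact hbr
            have hE2 : prodL φ ((⟨i, a⟩ : Σ j, G j) :: L₀) * base φ 1 =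
                prodL φ (L₀ ++ [⟨i, b⟩]) * base φ 1 := by
              rw [hE, prodL_append]
              simp [prodL]
            have hfst := fst_list_unique d hRWa hRW' hE2
            rw [hL₀] at hfst
            simp only [List.map_cons, List.map_append, List.cons_append,
              List.cons.injEq] at hfst
            exact hji hfst.1.symm

end RaagAux
end PartD

section PartE
namespace RaagAux
open Monoid Monoid.PushoutI Monoid.PushoutI.NormalWord

variable {ι : Type*} {G : ι → Type*} [∀ i, Group (G i)] {H : Type*} [Group H]
  {φ : ∀ i, H →* G i}

set_option linter.unusedSectionVars false

lemma normal_letter_not_mem {d : Transversal φ} (w : NormalWord d) {j : ι} {g : G j}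
    (hg : ⟨j, g⟩ ∈ w.toList) : g ∉ (φ j).range := by
  intro hr
  have hset : g ∈ d.set j := w.normalized j g hg
  have hne : g ≠ 1 := w.ne_one ⟨j, g⟩ hg
  have hinj := (d.compl j).1
  have h1 : ((g : G j) : G j) * (1 : G j) = (1 : G j) * g := by simp
  have hmem1 : (1 : G j) ∈ ((φ j).range : Subgroup (G j)) := Subgroup.one_mem _
  have := hinj (a₁ := ⟨⟨g, hr⟩, ⟨1, d.one_mem j⟩⟩) (a₂ := ⟨⟨1, hmem1⟩, ⟨g, hset⟩⟩) (by simpa using h1)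
  have h2 : (1 : G j) = g := congrArg (fun q => (q.2 : G j)) this
  exact hne h2.symm

lemma conj_mem_range (hφ : ∀ i, Function.Injective (φ i)) (i : ι) (p : PushoutI φ) (a : G i)
    (ha : ∀ c : G i, c⁻¹ * a * c ∉ (φ i).range)
    (hconj : p⁻¹ * PushoutI.of i a * p ∈ (PushoutI.of (φ := φ) i).range) :
    p ∈ (PushoutI.of (φ := φ) i).range := by
  classical
  obtain ⟨d⟩ := transversal_nonempty φ hφ
  set w := (NormalWord.equiv (d := d)) p with hw
  have hp : w.prod = p := NormalWord.equiv.symm_apply_apply p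
  have hofc : ∀ (u : Monoid.CoprodI.Word G), ofCoprodI u.prod = prodL φ u.toList := by
    intro u
    rw [Monoid.CoprodI.Word.prod, map_list_prod, List.map_map]
    simp [Function.comp_def, ofCoprodI_of, prodL]
  have hpd : p = PushoutI.of i (φ i w.head) * prodL φ w.toList := by
    have hdef : w.prod = base φ w.head * ofCoprodI (w.toWord.prod) := rfl
    rw [← hp, hdef, hofc, of_apply_eq_base]
  have hRW : RW φ w.toList := ⟨w.chain_ne, fun l hl => by
    rcases l with ⟨j, g⟩; exact normal_letter_not_mem w hl⟩
  set a' := (φ i w.head)⁻¹ * a * (φ i w.head) with ha'def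
  have ha' : ∀ c : G i, c⁻¹ * a' * c ∉ (φ i).range := by
    intro c hc
    have : ((φ i w.head) * c)⁻¹ * a * ((φ i w.head) * c) ∈ (φ i).range := by
      rw [mul_inv_rev]
      convert hc using 1
      rw [ha'def]
      group
    exact ha _ this
  have hconj' : (prodL φ w.toList)⁻¹ * PushoutI.of i a' * prodL φ w.toList ∈
      (PushoutI.of (φ := φ) i).range := by
    obtain ⟨b, hb⟩ := hconj
    refine ⟨b, ?_⟩
    rw [hb, hpd, ha'def]
    simp only [map_mul, map_inv]
    group
  have hq := conjL d i w.toList hRW a' ha' hconj'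
  rw [hpd]
  exact Subgroup.mul_mem _ ⟨φ i w.head, rfl⟩ hq

end RaagAux
end PartE

section PartF
namespace RaagAux
open Monoid Monoid.PushoutI

variable {A : Type*} {Γ : SimpleGraph A}

open scoped Classical

/-- Inclusion homomorphism between induced-subgraph RAAGs. -/
noncomputable def inclHom {S T : Set A} (hST : S ⊆ T) :
    RAAG (Γ.induce S) →* RAAG (Γ.induce T) :=
  raagLift (fun a => raagGen (Γ.induce T) ⟨a.1, hST a.2⟩)
    (fun a b hab => raag_adj_commute hab)

@[simp] lemma inclHom_gen {S T : Set A} (hST : S ⊆ T) (a : ↥S) :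
    inclHom (Γ := Γ) hST (raagGen (Γ.induce S) a) = raagGen (Γ.induce T) ⟨a.1, hST a.2⟩ :=
  raagLift_gen _ _ _

/-- Restriction (retraction) homomorphism between induced-subgraph RAAGs. -/
noncomputable def restrHom (S T : Set A) :
    RAAG (Γ.induce T) →* RAAG (Γ.induce S) :=
  raagLift (fun a => if h : (a : A) ∈ S then raagGen (Γ.induce S) ⟨a.1, h⟩ else 1)
    (by
      intro a b hab
      by_cases haS : (a : A) ∈ S <;> by_cases hbS : (b : A) ∈ S
      · rw [dif_pos haS, dif_pos hbS]
        exact raag_adj_commute hab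
      · rw [dif_pos haS, dif_neg hbS]; exact Commute.one_right _
      · rw [dif_neg haS, dif_pos hbS]; exact Commute.one_left _
      · rw [dif_neg haS, dif_neg hbS])

lemma inclHom_injective {S T : Set A} (hST : S ⊆ T) :
    Function.Injective (inclHom (Γ := Γ) hST) := by
  have hcomp : (restrHom (Γ := Γ) S T).comp (inclHom hST) = MonoidHom.id _ := by
    apply PresentedGroup.ext
    intro x
    show restrHom S T (inclHom hST (raagGen (Γ.induce S) x)) = raagGen (Γ.induce S) x
    rw [inclHom_gen]
    unfold restrHom
    rw [raagLift_gen]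
    rw [dif_pos x.2]
  intro u v huv
  have := congrArg (restrHom (Γ := Γ) S T) huv
  rwa [← MonoidHom.comp_apply, ← MonoidHom.comp_apply, hcomp, MonoidHom.id_apply,
    MonoidHom.id_apply] at this

section Amalgam

variable (Γ) (y : A)

/-- The star of `y`. -/
def star : Set A := {a | a = y ∨ Γ.Adj y a}
/-- The link of `y`. -/
def lk : Set A := {a | Γ.Adj y a}
/-- The complement of `y`. -/
def oth (_Γ : SimpleGraph A) (y : A) : Set A := {a | a ≠ y}

lemma y_mem_star : y ∈ star Γ y := Or.inl rfl
lemma lk_subset_star : lk Γ y ⊆ star Γ y := fun _ h => Or.inr h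
lemma lk_subset_oth : lk Γ y ⊆ oth Γ y := fun _ h => (Γ.ne_of_adj h).symm
lemma not_star_mem_oth {a : A} (h : a ∉ star Γ y) : a ∈ oth Γ y := by
  intro hay
  exact h (Or.inl hay)

/-- The two factor groups of the amalgam decomposition. -/
abbrev Gfam : Bool → Type _ :=
  fun b => cond b (RAAG (Γ.induce (star Γ y))) (RAAG (Γ.induce (oth Γ y)))

@[reducible] instance GfamGroup : ∀ b, Group (Gfam Γ y b) :=
  fun b => Bool.rec (motive := fun b => Group (Gfam Γ y b))
    (inferInstanceAs (Group (RAAG (Γ.induce (oth Γ y)))))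
    (inferInstanceAs (Group (RAAG (Γ.induce (star Γ y))))) b

/-- The amalgamating maps. -/
noncomputable def φfam : ∀ b, RAAG (Γ.induce (lk Γ y)) →* Gfam Γ y b :=
  fun b => Bool.rec (motive := fun b => RAAG (Γ.induce (lk Γ y)) →* Gfam Γ y b)
    (inclHom (lk_subset_oth Γ y)) (inclHom (lk_subset_star Γ y)) b

@[simp] lemma φfam_gen_true (x : ↥(lk Γ y)) :
    φfam Γ y true (raagGen (Γ.induce (lk Γ y)) x)
      = raagGen (Γ.induce (star Γ y)) ⟨x.1, lk_subset_star Γ y x.2⟩ :=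
  inclHom_gen _ _

@[simp] lemma φfam_gen_false (x : ↥(lk Γ y)) :
    φfam Γ y false (raagGen (Γ.induce (lk Γ y)) x)
      = raagGen (Γ.induce (oth Γ y)) ⟨x.1, lk_subset_oth Γ y x.2⟩ :=
  inclHom_gen _ _

lemma φfam_injective : ∀ b, Function.Injective (φfam Γ y b) := fun b => by
  cases b
  · exact inclHom_injective (Γ := Γ) (lk_subset_oth Γ y)
  · exact inclHom_injective (Γ := Γ) (lk_subset_star Γ y)

/-- The comparison map into the pushout. -/
noncomputable def toPush : RAAG Γ →* PushoutI (φfam Γ y) :=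
  raagLift
    (fun a =>
      if h : a ∈ star Γ y then PushoutI.of (φ := φfam Γ y) true (raagGen _ ⟨a, h⟩)
      else PushoutI.of (φ := φfam Γ y) false (raagGen _ ⟨a, not_star_mem_oth Γ y h⟩))
    (by
      have key : ∀ (a : A) (h : a ∈ lk Γ y),
          PushoutI.of (φ := φfam Γ y) true (raagGen _ ⟨a, lk_subset_star Γ y h⟩)
            = PushoutI.of (φ := φfam Γ y) false (raagGen _ ⟨a, lk_subset_oth Γ y h⟩) := by
        intro a h
        have h1 : raagGen (Γ.induce (star Γ y)) ⟨a, lk_subset_star Γ y h⟩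
            = φfam Γ y true (raagGen (Γ.induce (lk Γ y)) ⟨a, h⟩) := by
          show _ = inclHom (lk_subset_star Γ y) _
          rw [inclHom_gen]
        have h2 : raagGen (Γ.induce (oth Γ y)) ⟨a, lk_subset_oth Γ y h⟩
            = φfam Γ y false (raagGen (Γ.induce (lk Γ y)) ⟨a, h⟩) := by
          show _ = inclHom (lk_subset_oth Γ y) _
          rw [inclHom_gen]
        rw [h1, h2, of_apply_eq_base, of_apply_eq_base]
      have main : ∀ a b, Γ.Adj a b → ∀ (ha : a ∈ star Γ y), b ∉ star Γ y →
          ∀ (hb' : b ∈ oth Γ y),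
          Commute (PushoutI.of (φ := φfam Γ y) true (raagGen _ ⟨a, ha⟩))
            (PushoutI.of (φ := φfam Γ y) false (raagGen _ ⟨b, hb'⟩)) := by
        intro a b hab ha hb hb'
        have hay : a ∈ lk Γ y := by
          rcases ha with rfl | h
          · exact absurd (Or.inr hab) hb
          · exact h
        have ha2 : (⟨a, ha⟩ : ↥(star Γ y)) = ⟨a, lk_subset_star Γ y hay⟩ := rfl
        rw [ha2, key a hay]
        have hao : a ∈ oth Γ y := lk_subset_oth Γ y hay
        exact (raag_adj_commute
          (show (Γ.induce (oth Γ y)).Adj ⟨a, hao⟩ ⟨b, hb'⟩ from hab)).map _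
      intro a b hab
      by_cases ha : a ∈ star Γ y <;> by_cases hb : b ∈ star Γ y
      · rw [dif_pos ha, dif_pos hb]
        exact (raag_adj_commute
          (show (Γ.induce (star Γ y)).Adj ⟨a, ha⟩ ⟨b, hb⟩ from hab)).map _
      · rw [dif_pos ha, dif_neg hb]
        exact main a b hab ha hb _
      · rw [dif_neg ha, dif_pos hb]
        exact (main b a hab.symm hb ha _).symm
      · rw [dif_neg ha, dif_neg hb]
        exact (raag_adj_commute
          (show (Γ.induce (oth Γ y)).Adj ⟨a, not_star_mem_oth Γ y ha⟩
            ⟨b, not_star_mem_oth Γ y hb⟩ from hab)).map _)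

/-- The exit maps from the factors back to the RAAG. -/
noncomputable def exitHom : ∀ b, Gfam Γ y b →* RAAG Γ
  | true => raagLift (fun s => raagGen Γ s.1) (fun s t h => raag_adj_commute h)
  | false => raagLift (fun s => raagGen Γ s.1) (fun s t h => raag_adj_commute h)

@[simp] lemma exitHom_gen_true (s : ↥(star Γ y)) :
    exitHom Γ y true (raagGen (Γ.induce (star Γ y)) s) = raagGen Γ s.1 :=
  raagLift_gen _ (fun _ _ h => raag_adj_commute h) _

@[simp] lemma exitHom_gen_false (s : ↥(oth Γ y)) :
    exitHom Γ y false (raagGen (Γ.induce (oth Γ y)) s) = raagGen Γ s.1 :=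
  raagLift_gen _ (fun _ _ h => raag_adj_commute h) _

/-- The exit map from the base. -/
noncomputable def exitBase : RAAG (Γ.induce (lk Γ y)) →* RAAG Γ :=
  raagLift (fun s => raagGen Γ s.1) (fun s t h => raag_adj_commute h)

lemma exit_comp : ∀ b, (exitHom Γ y b).comp (φfam Γ y b) = exitBase Γ y := by
  intro b
  cases b
  · apply PresentedGroup.ext
    intro x
    show exitHom Γ y false (φfam Γ y false (raagGen (Γ.induce (lk Γ y)) x))
      = exitBase Γ y (raagGen (Γ.induce (lk Γ y)) x)
    rw [φfam_gen_false, exitHom_gen_false]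
    exact (raagLift_gen _ (fun _ _ h => raag_adj_commute h) _).symm
  · apply PresentedGroup.ext
    intro x
    show exitHom Γ y true (φfam Γ y true (raagGen (Γ.induce (lk Γ y)) x))
      = exitBase Γ y (raagGen (Γ.induce (lk Γ y)) x)
    rw [φfam_gen_true, exitHom_gen_true]
    exact (raagLift_gen _ (fun _ _ h => raag_adj_commute h) _).symm

/-- The comparison map out of the pushout. -/
noncomputable def fromPush : PushoutI (φfam Γ y) →* RAAG Γ :=
  PushoutI.lift (exitHom Γ y) (exitBase Γ y) (exit_comp Γ y)

lemma fromPush_toPush (x : RAAG Γ) : fromPush Γ y (toPush Γ y x) = x := by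
  have hcomp : (fromPush Γ y).comp (toPush Γ y) = MonoidHom.id _ := by
    apply PresentedGroup.ext
    intro a
    show fromPush Γ y (toPush Γ y (raagGen Γ a)) = raagGen Γ a
    rw [toPush, raagLift_gen]
    by_cases h : a ∈ star Γ y
    · rw [dif_pos h, fromPush, PushoutI.lift_of]
      exact exitHom_gen_true Γ y ⟨a, h⟩
    · rw [dif_neg h, fromPush, PushoutI.lift_of]
      exact exitHom_gen_false Γ y ⟨a, not_star_mem_oth Γ y h⟩
  have := congrArg (fun f : RAAG Γ →* RAAG Γ => f x) hcomp
  simpa using this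

end Amalgam
end RaagAux
end PartF

section PartG
namespace RaagAux
open Monoid Monoid.PushoutI

variable {A : Type*} {Γ : SimpleGraph A}

lemma toPush_mem_range_true {y : A} {h : RAAG Γ} (hh : h ∈ parabolic Γ (star Γ y)) :
    toPush Γ y h ∈ (PushoutI.of (φ := φfam Γ y) true).range := by
  have hle : parabolic Γ (star Γ y) ≤
      ((PushoutI.of (φ := φfam Γ y) true).range).comap (toPush Γ y) := by
    apply (Subgroup.closure_le _).mpr
    rintro _ ⟨a, ha, rfl⟩
    rw [SetLike.mem_coe, Subgroup.mem_comap, toPush, raagLift_gen, dif_pos ha]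
    exact ⟨_, rfl⟩
  exact hle hh

lemma exitBase_mem (y : A) (h' : RAAG (Γ.induce (lk Γ y))) :
    exitBase Γ y h' ∈ parabolic Γ (lk Γ y) :=
  raagHom_mem _ _ (fun a => by
    rw [exitBase, raagLift_gen]
    exact Subgroup.subset_closure ⟨a.1, a.2, rfl⟩) h'

lemma exitHom_true_mem (y : A) (g₁ : Gfam Γ y true) :
    exitHom Γ y true g₁ ∈ parabolic Γ (star Γ y) :=
  raagHom_mem (Γ := Γ.induce (star Γ y)) (exitHom Γ y true) _ (fun a =>
    (exitHom_gen_true Γ y a) ▸ Subgroup.subset_closure ⟨a.1, a.2, rfl⟩) g₁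

/-- Key lemma: if `w` and `g⁻¹wg` lie in the star parabolic of `y` and `w` has nonzero
exponent sum at `y`, then `g` lies in the star parabolic of `y`. -/
lemma mem_parabolic_star {y : A} {w g : RAAG Γ}
    (hwst : w ∈ parabolic Γ (star Γ y))
    (hcst : g⁻¹ * w * g ∈ parabolic Γ (star Γ y))
    (hne : (piAb Γ w).toAdd y ≠ 0) :
    g ∈ parabolic Γ (star Γ y) := by
  obtain ⟨w₁, hw₁⟩ := toPush_mem_range_true hwst
  have ha : ∀ c : Gfam Γ y true, c⁻¹ * w₁ * c ∉ (φfam Γ y true).range := by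
    rintro c ⟨h', hh'⟩
    have h1 : PushoutI.of (φ := φfam Γ y) true (c⁻¹ * w₁ * c) = base (φfam Γ y) h' := by
      rw [← hh', of_apply_eq_base]
    set u := fromPush Γ y (PushoutI.of (φ := φfam Γ y) true c) with hu
    have hfw : fromPush Γ y (PushoutI.of (φ := φfam Γ y) true w₁) = w := by
      rw [hw₁, fromPush_toPush]
    have h2 : u⁻¹ * w * u = exitBase Γ y h' := by
      have h3 := congrArg (fromPush Γ y) h1
      simp only [map_mul, map_inv] at h3
      rw [hfw, ← hu] at h3
      unfold fromPush at h3
      rw [PushoutI.lift_base] at h3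
      exact h3
    have h4 := piAb_support (exitBase_mem y h') y (by
      intro hyl
      exact Γ.irrefl hyl)
    have h5 : (piAb Γ w).toAdd y = 0 := by
      have hconj := piAb_conj u w
      rw [h2] at hconj
      rw [hconj] at h4
      exact h4
    exact hne h5
  have hconjP : (toPush Γ y g)⁻¹ * PushoutI.of (φ := φfam Γ y) true w₁ * toPush Γ y g
      ∈ (PushoutI.of (φ := φfam Γ y) true).range := by
    rw [hw₁, ← map_inv, ← map_mul, ← map_mul]
    exact toPush_mem_range_true hcst
  obtain ⟨g₁, hg₁⟩ :=
    conj_mem_range (φfam_injective Γ y) true (toPush Γ y g) w₁ ha hconjP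
  have hfin : g = exitHom Γ y true g₁ := by
    rw [← fromPush_toPush Γ y g, ← hg₁, fromPush, PushoutI.lift_of]
  rw [hfin]
  exact exitHom_true_mem y g₁

end RaagAux
end PartG

/-- If `Y` is a clique and both `w` and `g⁻¹ w g` lie in `⟨Y⟩`, then every generator
in the support of `g` commutes with every generator in the support of `w`. -/
theorem raag_supp_commute_of_conj_mem_clique_parabolic {A : Type*} [DecidableEq A]
    (Γ : SimpleGraph A) (Y : Set A)
    (hY : ∀ x ∈ Y, ∀ y ∈ Y, x ≠ y → Γ.Adj x y)
    (w g : RAAG Γ)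
    (hw : w ∈ parabolic Γ Y) (hc : g⁻¹ * w * g ∈ parabolic Γ Y) :
    ∀ x ∈ raagSupp Γ g, ∀ y ∈ raagSupp Γ w, Commute (raagGen Γ x) (raagGen Γ y) := by
  intro x hx y hy
  by_cases hxy : x = y
  · subst hxy; rfl
  have hyY : y ∈ Y := RaagAux.supp_subset_of_mem_parabolic hw hy
  have hYstar : Y ⊆ RaagAux.star Γ y := by
    intro z hz
    by_cases hzy : z = y
    · exact Or.inl hzy
    · exact Or.inr (hY y hyY z hz (fun h => hzy h.symm))
  have hne := RaagAux.exp_ne_zero_of_mem_supp Y hY hw hy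
  have hg : g ∈ parabolic Γ (RaagAux.star Γ y) :=
    RaagAux.mem_parabolic_star (RaagAux.parabolic_mono hYstar hw)
      (RaagAux.parabolic_mono hYstar hc) hne
  have hxstar := RaagAux.supp_subset_of_mem_parabolic hg hx
  rcases hxstar with h1 | h2
  · exact absurd h1 hxy
  · exact RaagAux.raag_adj_commute h2.symm
end

section
/- Let A = {a, b, c}, R = {[a,b], [b,c]}, and G = ⟨A | R⟩ ≅ F₂ × ℤ (with b central over a and c). Let s = abc, n > 0, N the normal closure of sⁿ in G, and Q = G/N. Then the subgroup ⟨a, c⟩ of G (free of rank 2) does not embed in Q: specifically [(ac)ⁿ, a] = 1 in Q but [(ac)ⁿ, a] ≠ 1 in G. -/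
/-- The path graph on three vertices 0 — 1 — 2 . -/
def pathGraph3 : SimpleGraph (Fin 3) :=
  SimpleGraph.fromRel fun i j => (i = 0 ∧ j = 1) ∨ (i = 1 ∧ j = 2)

noncomputable def aGen : RAAG pathGraph3 := raagGen pathGraph3 0
noncomputable def bGen : RAAG pathGraph3 := raagGen pathGraph3 1
noncomputable def cGen : RAAG pathGraph3 := raagGen pathGraph3 2

open scoped commutatorElement

section AuxRaag

/-- Adjacent generators commute in a RAAG. -/
lemma raag_commute {A : Type*} {Γ : SimpleGraph A} {x y : A} (h : Γ.Adj x y) :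
    Commute (raagGen Γ x) (raagGen Γ y) := by
  have hrel : (FreeGroup.of x * FreeGroup.of y * (FreeGroup.of x)⁻¹ * (FreeGroup.of y)⁻¹ :
      FreeGroup A) ∈ raagRels Γ := ⟨x, y, h, rfl⟩
  have h1 : PresentedGroup.mk (raagRels Γ)
      (FreeGroup.of x * FreeGroup.of y * (FreeGroup.of x)⁻¹ * (FreeGroup.of y)⁻¹) = 1 := by
    rw [PresentedGroup.mk_eq_one_iff]
    exact Subgroup.subset_normalClosure hrel
  simp only [_root_.map_mul, map_inv] at h1
  have h2 : ⁅raagGen Γ x, raagGen Γ y⁆ = 1 := h1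
  exact commutatorElement_eq_one_iff_commute.mp h2

lemma adj01 : pathGraph3.Adj 0 1 := by
  simp [pathGraph3, SimpleGraph.fromRel_adj]

lemma adj12 : pathGraph3.Adj 1 2 := by
  simp [pathGraph3, SimpleGraph.fromRel_adj]

lemma comm_ab : Commute aGen bGen := raag_commute adj01
lemma comm_bc : Commute bGen cGen := raag_commute adj12

open Matrix

abbrev SL2 := Matrix.SpecialLinearGroup (Fin 2) ℤ

def Msl : SL2 := ⟨!![1,2;0,1], by simp [Matrix.det_fin_two_of]⟩
def Nsl : SL2 := ⟨!![1,0;2,1], by simp [Matrix.det_fin_two_of]⟩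

lemma pow_entries (n : ℕ) (hn : 1 ≤ n) :
    ∃ p q q' r : ℤ, ((Msl * Nsl) ^ n : SL2).1 = !![p,q;q',r] ∧
      1 ≤ p ∧ 1 ≤ q ∧ 1 ≤ q' ∧ 1 ≤ r := by
  induction n, hn using Nat.le_induction with
  | base =>
      refine ⟨5, 2, 2, 1, ?_, by norm_num, by norm_num, by norm_num, by norm_num⟩
      show (Msl.1 * Nsl.1) ^ 1 = _
      simp [Msl, Nsl, Matrix.mul_fin_two]
  | succ n hn ih =>
      obtain ⟨p, q, q', r, h, hp, hq, hq', hr⟩ := ih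
      refine ⟨5*p+2*q, 2*p+q, 5*q'+2*r, 2*q'+r, ?_, by linarith, by linarith, by linarith,
        by linarith⟩
      have : ((Msl * Nsl) ^ (n+1) : SL2).1 = ((Msl * Nsl) ^ n : SL2).1 * (Msl.1 * Nsl.1) := by
        rw [pow_succ]; rfl
      rw [this, h]
      simp only [Msl, Nsl, Matrix.mul_fin_two]
      norm_num
      ring_nf
      simp only [and_self]

lemma sl2_not_commute (n : ℕ) (hn : 1 ≤ n) : ¬ Commute ((Msl * Nsl) ^ n) Msl := by
  obtain ⟨p, q, q', r, h, hp, hq, hq', hr⟩ := pow_entries n hn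
  intro hc
  have hmat : ((Msl * Nsl) ^ n : SL2).1 * Msl.1 = Msl.1 * ((Msl * Nsl) ^ n : SL2).1 := by
    exact_mod_cast congrArg Subtype.val hc
  rw [h] at hmat
  have h11 : ((!![p,q;q',r] : Matrix (Fin 2) (Fin 2) ℤ) * Msl.1) 1 1
      = (Msl.1 * !![p,q;q',r]) 1 1 := by rw [hmat]
  simp [Msl, Matrix.mul_fin_two] at h11
  omega

/-- The homomorphism RAAG(path3) → SL₂(ℤ) killing b. -/
noncomputable def toSL2 : RAAG pathGraph3 →* SL2 :=
  PresentedGroup.toGroup (f := ![Msl, 1, Nsl]) (by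
    rintro r ⟨x, y, hadj, rfl⟩
    have hne : x ≠ y := hadj.ne
    have : (x = 0 ∧ y = 1) ∨ (x = 1 ∧ y = 0) ∨ (x = 1 ∧ y = 2) ∨ (x = 2 ∧ y = 1) := by
      revert hadj
      fin_cases x <;> fin_cases y <;>
        simp_all [pathGraph3, SimpleGraph.fromRel_adj] <;> decide
    simp only [_root_.map_mul, map_inv, FreeGroup.lift_apply_of]
    rcases this with ⟨hx, hy⟩ | ⟨hx, hy⟩ | ⟨hx, hy⟩ | ⟨hx, hy⟩ <;> subst hx <;> subst hy <;>
      simp <;> group)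

lemma toSL2_a : toSL2 aGen = Msl := by
  simpa [aGen, raagGen, toSL2] using PresentedGroup.toGroup.of (f := ![Msl, 1, Nsl]) _ (x := 0)

lemma toSL2_c : toSL2 cGen = Nsl := by
  simpa [cGen, raagGen, toSL2] using PresentedGroup.toGroup.of (f := ![Msl, 1, Nsl]) _ (x := 2)

end AuxRaag

/-- In the RAAG on the path a — b — c (isomorphic to F₂ × ℤ), with s = abc and N the normal
closure of sⁿ (n > 0), the subgroup ⟨a, c⟩ does not embed in G/N; specifically the commutator
[(ac)ⁿ, a] is nontrivial in G but trivial in G/N. -/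
theorem raag_path3_free_subgroup_does_not_embed (n : ℕ) (hn : 0 < n) :
    ⁅(aGen * cGen) ^ n, aGen⁆ ≠ 1 ∧
    ⁅(aGen * cGen) ^ n, aGen⁆ ∈
      Subgroup.normalClosure {(aGen * bGen * cGen) ^ n} ∧
    ¬ Function.Injective
      (fun g : Subgroup.closure {aGen, cGen} =>
        (QuotientGroup.mk (g : RAAG pathGraph3) :
          RAAG pathGraph3 ⧸ Subgroup.normalClosure {(aGen * bGen * cGen) ^ n})) := by
  -- Part 1: the commutator is nontrivial in G, via the map to SL₂(ℤ).
  have part1 : ⁅(aGen * cGen) ^ n, aGen⁆ ≠ 1 := by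
    intro h
    have := congrArg toSL2 h
    simp only [map_commutatorElement, map_pow, map_mul, map_one, toSL2_a, toSL2_c] at this
    exact sl2_not_commute n hn (commutatorElement_eq_one_iff_commute.mp this)
  -- b commutes with everything relevant
  have hba : Commute bGen aGen := comm_ab.symm
  have hbc : Commute bGen cGen := comm_bc
  have hbac : Commute (aGen * cGen) bGen := (hba.symm).mul_left hbc.symm
  -- s = (a*c)*b, so s^n = (a*c)^n * b^n
  have hs : (aGen * bGen * cGen) ^ n = (aGen * cGen) ^ n * bGen ^ n := by
    have h1 : aGen * bGen * cGen = (aGen * cGen) * bGen := by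
      rw [mul_assoc, mul_assoc, hbc.eq]
    rw [h1, hbac.mul_pow]
  -- Part 2: membership in the normal closure
  have part2 : ⁅(aGen * cGen) ^ n, aGen⁆ ∈
      Subgroup.normalClosure {(aGen * bGen * cGen) ^ n} := by
    set N := Subgroup.normalClosure {(aGen * bGen * cGen) ^ n} with hN
    set φ := QuotientGroup.mk' N with hφ
    rw [← QuotientGroup.ker_mk' N, MonoidHom.mem_ker]
    have hsn : φ ((aGen * bGen * cGen) ^ n) = 1 := by
      rw [hφ, QuotientGroup.mk'_apply, QuotientGroup.eq_one_iff]
      exact Subgroup.subset_normalClosure rfl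
    have hac : φ ((aGen * cGen) ^ n) = (φ bGen ^ n)⁻¹ := by
      have h1 := congrArg φ hs
      rw [hsn] at h1; simp only [_root_.map_mul, map_pow] at h1
      rw [map_pow]
      exact eq_inv_of_mul_eq_one_left (by simp only [_root_.map_mul]; rw [← h1])
    show φ ⁅(aGen * cGen) ^ n, aGen⁆ = 1
    rw [map_commutatorElement, hac, commutatorElement_eq_one_iff_commute]
    exact (((hba.map φ).pow_left n).inv_left)
  refine ⟨part1, part2, ?_⟩
  -- Part 3: non-injectivity
  intro hinj
  have haMem : aGen ∈ Subgroup.closure ({aGen, cGen} : Set (RAAG pathGraph3)) :=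
    Subgroup.subset_closure (by simp)
  have hcMem : cGen ∈ Subgroup.closure ({aGen, cGen} : Set (RAAG pathGraph3)) :=
    Subgroup.subset_closure (by simp)
  have hkMem : ⁅(aGen * cGen) ^ n, aGen⁆ ∈
      Subgroup.closure ({aGen, cGen} : Set (RAAG pathGraph3)) := by
    have hacn : (aGen * cGen) ^ n ∈ Subgroup.closure ({aGen, cGen} : Set (RAAG pathGraph3)) :=
      Subgroup.pow_mem _ (Subgroup.mul_mem _ haMem hcMem) n
    rw [commutatorElement_def]
    exact Subgroup.mul_mem _ (Subgroup.mul_mem _ (Subgroup.mul_mem _ hacn haMem)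
      (Subgroup.inv_mem _ hacn)) (Subgroup.inv_mem _ haMem)
  have heq : (fun g : Subgroup.closure {aGen, cGen} =>
        (QuotientGroup.mk (g : RAAG pathGraph3) :
          RAAG pathGraph3 ⧸ Subgroup.normalClosure {(aGen * bGen * cGen) ^ n}))
      ⟨⁅(aGen * cGen) ^ n, aGen⁆, hkMem⟩
      = (fun g : Subgroup.closure {aGen, cGen} =>
        (QuotientGroup.mk (g : RAAG pathGraph3) :
          RAAG pathGraph3 ⧸ Subgroup.normalClosure {(aGen * bGen * cGen) ^ n})) 1 := by
    simp only
    rw [OneMemClass.coe_one, QuotientGroup.mk_one, QuotientGroup.eq_one_iff]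
    exact part2
  have := hinj heq
  apply part1
  simpa using congrArg (Subtype.val) this
end
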